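/- arXiv:2402.09630 — 11 statements merged into one kernel-verified Lean document; each statement's English description precedes it below -/
import Mathlib

section
/- Let f : ℝ → ℝ be continuously differentiable, let u_- > 0 and s ∈ ℝ. Suppose U : ℝ → ℝ is twice continuously differentiable with U(z) > 0 for all z, U satisfies the profile equation -s·U'(z) - (U'/U)'(z) + (f∘U)'(z) = 0 for all z ∈ ℝ, U(z) → 0 as z → +∞, U(z) → u_- as z → -∞, and U'(z)/U(z) → 0 as z → ±∞. Then s = (f(u_-) - f(0))/u_- (the Rankine–Hugoniot condition). -/
/-!
Integrating the profile equation once shows that `-s U - U'/U + f ∘ U` is constant along the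
wave. Comparing its limits `f 0` at `+∞` and `-s u₋ + f u₋` at `-∞` gives `s u₋ = f u₋ - f 0`.
-/

open Filter Topology

theorem eq_of_tendsto_atTop_of_tendsto_atBot_of_deriv_eq_zero
    {E : Type*} [NormedAddCommGroup E] [NormedSpace ℝ E] {G : ℝ → E}
    (hG : Differentiable ℝ G) (hG' : ∀ z, deriv G z = 0) {a b : E}
    (ha : Tendsto G atTop (𝓝 a)) (hb : Tendsto G atBot (𝓝 b)) : a = b := by
  have hconst : G = fun _ => G 0 := funext fun z => is_const_of_deriv_eq_zero hG hG' z 0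
  rw [hconst] at ha hb
  exact (tendsto_nhds_unique tendsto_const_nhds ha).symm.trans
    (tendsto_nhds_unique tendsto_const_nhds hb)

theorem differentiable_deriv_div_self {U : ℝ → ℝ} (hU : ContDiff ℝ 2 U) (hU0 : ∀ z, U z ≠ 0) :
    Differentiable ℝ (fun y => deriv U y / U y) := by
  have hU' : ContDiff ℝ 1 (deriv U) := hU.iterate_deriv' 1 1
  exact (hU'.differentiable one_ne_zero).div (hU.differentiable (by norm_num)) hU0

/-- If a positive C² profile `U` satisfies the travelling-wave equation
`-s U' - (U'/U)' + (f ∘ U)' = 0` with far-field limits `0` at `+∞` and `u₋` at `-∞`,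
and `U'/U → 0` at `±∞`, then the Rankine–Hugoniot condition `s = (f(u₋) - f(0))/u₋` holds. -/
theorem stmt_0
    (f : ℝ → ℝ) (hf : ContDiff ℝ 1 f)
    (um : ℝ) (hum : 0 < um) (s : ℝ)
    (U : ℝ → ℝ) (hU : ContDiff ℝ 2 U)
    (hUpos : ∀ z, 0 < U z)
    (heq : ∀ z : ℝ,
      -s * deriv U z - deriv (fun y => deriv U y / U y) z
        + deriv (fun y => f (U y)) z = 0)
    (hUtop : Tendsto U atTop (nhds 0))
    (hUbot : Tendsto U atBot (nhds um))
    (hratiotop : Tendsto (fun z => deriv U z / U z) atTop (nhds 0))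
    (hratiobot : Tendsto (fun z => deriv U z / U z) atBot (nhds 0)) :
    s = (f um - f 0) / um := by
  have hUd : Differentiable ℝ U := hU.differentiable (by norm_num)
  have hratio := differentiable_deriv_div_self hU fun z => (hUpos z).ne'
  have hfU : Differentiable ℝ (fun y => f (U y)) := (hf.differentiable one_ne_zero).comp hUd
  set G : ℝ → ℝ := fun z => -s * U z - deriv U z / U z + f (U z)
  have hGd : Differentiable ℝ G := ((hUd.const_mul (-s)).sub hratio).add hfU
  have hG' : ∀ z, deriv G z = 0 := fun z =>
    (((((hUd z).hasDerivAt.const_mul (-s)).sub (hratio z).hasDerivAt).add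
      (hfU z).hasDerivAt).deriv).trans (heq z)
  have hlim := eq_of_tendsto_atTop_of_tendsto_atBot_of_deriv_eq_zero hGd hG'
    (((hUtop.const_mul (-s)).sub hratiotop).add ((hf.continuous.tendsto 0).comp hUtop))
    (((hUbot.const_mul (-s)).sub hratiobot).add ((hf.continuous.tendsto um).comp hUbot))
  field_simp
  linarith
end

section
/- Let f : ℝ → ℝ be continuously differentiable, let u_- > 0 and s = (f(u_-) - f(0))/u_-, and set g(u) = f(u) - f(0) - s·u. Suppose U : ℝ → ℝ is continuously differentiable with 0 < U(z) < u_- for all z, U'(z) = U(z)·g(U(z)) for all z ∈ ℝ, U(z) → 0 as z → +∞ and U(z) → u_- as z → -∞. Then the generalized shock condition holds: g(u) < 0 for every u ∈ (0, u_-). -/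
/-!
Put `F u = u · g(u)`, so that `U' = F(U)`. Since `F` is `C¹`, it is Lipschitz on `[0, u₋]`, and
an orbit meeting a zero of `F` is constant by uniqueness of solutions; as `U → 0` while `U > 0`,
`U` is not constant, so `g ∘ U` never vanishes and has constant sign. It cannot be positive, since
then `U` would increase while tending to `0` and staying positive. Hence `g ∘ U < 0`, and by the
intermediate value theorem `U` takes every value in `(0, u₋)`.
-/

open Filter Set Topology

theorem ODE_solution_eq_const_of_apply_eq_zero {E : Type*} [NormedAddCommGroup E]
    [NormedSpace ℝ E] {F : E → E} {K : NNReal} {s : Set E} {U : ℝ → E} {z₀ : ℝ}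
    (hF : LipschitzOnWith K F s) (hU : ∀ t, HasDerivAt U (F (U t)) t) (hUs : ∀ t, U t ∈ s)
    (hz₀ : F (U z₀) = 0) : U = fun _ ↦ U z₀ :=
  ODE_solution_unique_univ (v := fun _ ↦ F) (fun _ ↦ hF) (fun t ↦ ⟨hU t, hUs t⟩)
    (fun t ↦ ⟨hz₀ ▸ hasDerivAt_const t (U z₀), hUs z₀⟩) rfl

theorem Continuous.forall_neg_or_forall_pos {h : ℝ → ℝ} (hh : Continuous h)
    (hne : ∀ z, h z ≠ 0) : (∀ z, h z < 0) ∨ (∀ z, 0 < h z) := by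
  by_contra! hsign
  obtain ⟨⟨a, ha⟩, ⟨b, hb⟩⟩ := hsign
  obtain ⟨z, hz⟩ := mem_range_of_exists_le_of_exists_ge hh ⟨b, hb⟩ ⟨a, ha⟩
  exact hne z hz

theorem Continuous.Ioo_subset_range_of_tendsto {α : Type*} [LinearOrder α] [TopologicalSpace α]
    [OrderClosedTopology α] {U : ℝ → α} {a b : α} (hU : Continuous U)
    (hUtop : Tendsto U atTop (𝓝 a)) (hUbot : Tendsto U atBot (𝓝 b)) : Ioo a b ⊆ range U :=
  fun _ hc ↦ mem_range_of_exists_le_of_exists_ge hU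
    ((hUtop.eventually_lt_const hc.1).exists.imp fun _ ↦ le_of_lt)
    ((hUbot.eventually_const_lt hc.2).exists.imp fun _ ↦ le_of_lt)

theorem stmt_1_general
    (f : ℝ → ℝ) (hf : ContDiff ℝ 1 f)
    (um : ℝ)
    (s : ℝ)
    (g : ℝ → ℝ) (hg : ∀ u, g u = f u - f 0 - s * u)
    (U : ℝ → ℝ) (hU : ContDiff ℝ 1 U)
    (hUrange : ∀ z, U z ∈ Set.Ioo 0 um)
    (hUode : ∀ z, deriv U z = U z * g (U z))
    (hUtop : Tendsto U atTop (nhds 0))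
    (hUbot : Tendsto U atBot (nhds um)) :
    ∀ u ∈ Set.Ioo 0 um, g u < 0 := by
  have hg_cont : ContDiff ℝ 1 g := by
    rw [funext hg]
    fun_prop
  have hU_deriv (z : ℝ) : HasDerivAt U (U z * g (U z)) z :=
    hUode z ▸ (hU.differentiable one_ne_zero z).hasDerivAt
  obtain ⟨K, hK⟩ : ∃ K, LipschitzOnWith K (fun u ↦ u * g u) (Icc 0 um) :=
    (contDiff_id.mul hg_cont).locallyLipschitz.locallyLipschitzOn.exists_lipschitzOnWith_of_compact
      isCompact_Icc
  have hgU_ne (z : ℝ) : g (U z) ≠ 0 := by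
    intro hz
    have hconst := ODE_solution_eq_const_of_apply_eq_zero hK hU_deriv
      (fun t ↦ Ioo_subset_Icc_self (hUrange t)) (z₀ := z) (by simp [hz])
    rw [hconst] at hUtop
    exact (hUrange z).1.ne' (tendsto_nhds_unique tendsto_const_nhds hUtop)
  rcases (hg_cont.continuous.comp hU.continuous).forall_neg_or_forall_pos hgU_ne with hneg | hpos
  · intro u hu
    obtain ⟨z, rfl⟩ := hU.continuous.Ioo_subset_range_of_tendsto hUtop hUbot hu
    exact hneg z
  · have hmono : StrictMono U := strictMono_of_deriv_pos fun z ↦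
      hUode z ▸ mul_pos (hUrange z).1 (hpos z)
    exact absurd (hmono.monotone.ge_of_tendsto hUtop 0) (hUrange 0).1.not_ge

/-- If a C¹ shock profile `U` with values in `(0, u₋)` satisfies
`U' = U · g(U)` with limits `0` at `+∞` and `u₋` at `-∞`, where
`g(u) = f(u) - f(0) - s·u` and `s = (f(u₋) - f(0))/u₋`, then the generalized shock
condition holds: `g(u) < 0` for all `u ∈ (0, u₋)`. -/
theorem stmt_1
    (f : ℝ → ℝ) (hf : ContDiff ℝ 1 f)
    (um : ℝ) (hum : 0 < um)
    (s : ℝ) (hs : s = (f um - f 0) / um)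
    (g : ℝ → ℝ) (hg : ∀ u, g u = f u - f 0 - s * u)
    (U : ℝ → ℝ) (hU : ContDiff ℝ 1 U)
    (hUrange : ∀ z, U z ∈ Set.Ioo 0 um)
    (hUode : ∀ z, deriv U z = U z * g (U z))
    (hUtop : Tendsto U atTop (nhds 0))
    (hUbot : Tendsto U atBot (nhds um)) :
    ∀ u ∈ Set.Ioo 0 um, g u < 0 :=
  stmt_1_general f hf um s g hg U hU hUrange hUode hUtop hUbot
end

section
/- Let f : ℝ → ℝ be continuously differentiable, let u_- > 0, set s = (f(u_-) - f(0))/u_- and g(u) = f(u) - f(0) - s·u, and assume g(u) < 0 for every u ∈ (0, u_-). Then there exists a continuously differentiable function U : ℝ → ℝ with 0 < U(z) < u_- for all z, satisfying U'(z) = U(z)·g(U(z)) for all z ∈ ℝ, U(z) → u_- as z → -∞, U(z) → 0 as z → +∞, and U'(z) < 0 for all z ∈ ℝ. -/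
/-!
The profile solves the autonomous equation `U' = F(U)` with `F(u) = u g(u)`, which vanishes at
`0` and `u₋` and is negative in between. Separating variables, `U` is the inverse of the time map
`h(u) = ∫_c^u dv / F(v)`, strictly decreasing on `(0, u₋)`. Since `F` is Lipschitz and vanishes at
both endpoints, `|F(u)|` is at most `K` times the distance to either endpoint, so `h` diverges
logarithmically at both ends and maps `(0, u₋)` onto `ℝ`.
-/

open Filter Set Real
open scoped Topology NNReal

theorem hasDerivAt_intervalIntegral_of_continuousOn_Ioo {φ : ℝ → ℝ} {a b c u : ℝ}
    (hφ : ContinuousOn φ (Ioo a b)) (hc : c ∈ Ioo a b) (hu : u ∈ Ioo a b) :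
    HasDerivAt (fun x => ∫ v in c..x, φ v) (φ u) u :=
  intervalIntegral.integral_hasDerivAt_right
    ((hφ.mono (ordConnected_Ioo.uIcc_subset hc hu)).intervalIntegrable)
    (hφ.stronglyMeasurableAtFilter isOpen_Ioo u hu) (hφ.continuousAt (Ioo_mem_nhds hu.1 hu.2))

section TimeMap

variable {h F : ℝ → ℝ} {a b K : ℝ}

/-- Comparison with `-K⁻¹ log (u - a)`, the time map of `u' = -K (u - a)`. -/
theorem tendsto_nhdsGT_atTop_of_hasDerivAt_inv (hab : a < b)
    (hh : ∀ u ∈ Ioo a b, HasDerivAt h (F u)⁻¹ u) (hneg : ∀ u ∈ Ioo a b, F u < 0)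
    (hle : ∀ u ∈ Ioo a b, -F u ≤ K * (u - a)) :
    Tendsto h (𝓝[>] a) atTop := by
  obtain ⟨c, hc⟩ := nonempty_Ioo.2 hab
  have hK : 0 < K :=
    pos_of_mul_pos_left ((neg_pos.2 (hneg c hc)).trans_le (hle c hc)) (sub_pos.2 hc.1).le
  set φ : ℝ → ℝ := fun u => h u + K⁻¹ * log (u - a)
  have hφ : ∀ u ∈ Ioo a b, HasDerivAt φ ((F u)⁻¹ + K⁻¹ * (u - a)⁻¹) u := fun u hu =>
    ((hh u hu).add ((((hasDerivAt_id u).sub_const a).log (sub_pos.2 hu.1).ne').const_mul K⁻¹))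
      |>.congr_deriv (by simp [div_eq_mul_inv])
  have hanti : AntitoneOn φ (Ioo a b) := by
    refine antitoneOn_of_hasDerivWithinAt_nonpos (convex_Ioo a b)
      (fun u hu => (hφ u hu).continuousAt.continuousWithinAt)
      (fun u hu => (hφ u (interior_subset hu)).hasDerivWithinAt) fun u hu => ?_
    rw [interior_Ioo] at hu
    have hinv := inv_anti₀ (neg_pos.2 (hneg u hu)) (hle u hu)
    rw [inv_neg, mul_inv] at hinv
    linarith
  have hlog : Tendsto (fun u => φ c - K⁻¹ * log (u - a)) (𝓝[>] a) atTop := by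
    have hsub : Tendsto (fun u => u - a) (𝓝[>] a) (𝓝[>] 0) := by
      have := (continuous_sub_right a).continuousWithinAt.tendsto_nhdsWithin (x := a)
        (fun u hu => sub_lt_sub_right hu a : MapsTo (· - a) (Ioi a) (Ioi (a - a)))
      rwa [sub_self] at this
    exact tendsto_atTop_add_const_left _ _ <|
      (tendsto_neg_atBot_atTop.comp ((tendsto_log_nhdsGT_zero.comp hsub).const_mul_atBot
        (inv_pos.2 hK))).congr fun u => by simp
  refine tendsto_atTop_mono' _ ?_ hlog
  filter_upwards [Ioo_mem_nhdsGT hc.1] with u hu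
  have := hanti ⟨hu.1, hu.2.trans hc.2⟩ hc hu.2.le
  simp only [φ] at this ⊢
  linarith

/-- Comparison with `K⁻¹ log (b - u)`, the time map of `u' = -K (b - u)`. -/
theorem tendsto_nhdsLT_atBot_of_hasDerivAt_inv (hab : a < b)
    (hh : ∀ u ∈ Ioo a b, HasDerivAt h (F u)⁻¹ u) (hneg : ∀ u ∈ Ioo a b, F u < 0)
    (hle : ∀ u ∈ Ioo a b, -F u ≤ K * (b - u)) :
    Tendsto h (𝓝[<] b) atBot := by
  obtain ⟨c, hc⟩ := nonempty_Ioo.2 hab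
  have hK : 0 < K :=
    pos_of_mul_pos_left ((neg_pos.2 (hneg c hc)).trans_le (hle c hc)) (sub_pos.2 hc.2).le
  set φ : ℝ → ℝ := fun u => h u - K⁻¹ * log (b - u)
  have hφ : ∀ u ∈ Ioo a b, HasDerivAt φ ((F u)⁻¹ + K⁻¹ * (b - u)⁻¹) u := fun u hu =>
    ((hh u hu).sub ((((hasDerivAt_id u).const_sub b).log (sub_pos.2 hu.2).ne').const_mul K⁻¹))
      |>.congr_deriv (by simp [div_eq_mul_inv])
  have hanti : AntitoneOn φ (Ioo a b) := by
    refine antitoneOn_of_hasDerivWithinAt_nonpos (convex_Ioo a b)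
      (fun u hu => (hφ u hu).continuousAt.continuousWithinAt)
      (fun u hu => (hφ u (interior_subset hu)).hasDerivWithinAt) fun u hu => ?_
    rw [interior_Ioo] at hu
    have hinv := inv_anti₀ (neg_pos.2 (hneg u hu)) (hle u hu)
    rw [inv_neg, mul_inv] at hinv
    linarith
  have hlog : Tendsto (fun u => φ c + K⁻¹ * log (b - u)) (𝓝[<] b) atBot := by
    have hsub : Tendsto (fun u => b - u) (𝓝[<] b) (𝓝[>] 0) := by
      have := (continuous_sub_left b).continuousWithinAt.tendsto_nhdsWithin (x := b)
        (fun u hu => sub_lt_sub_left hu b : MapsTo (b - ·) (Iio b) (Ioi (b - b)))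
      rwa [sub_self] at this
    exact tendsto_atBot_add_const_left _ _ <|
      (tendsto_log_nhdsGT_zero.comp hsub).const_mul_atBot (inv_pos.2 hK)
  refine tendsto_atBot_mono' _ ?_ hlog
  filter_upwards [Ioo_mem_nhdsLT hc.2] with u hu
  have := hanti hc ⟨hc.1.trans hu.1, hu.2⟩ hu.1.le
  simp only [φ] at this ⊢
  linarith

end TimeMap

theorem StrictAntiOn.exists_rightInverse_of_surjOn {h : ℝ → ℝ} {a b : ℝ}
    (hanti : StrictAntiOn h (Ioo a b)) (hsurj : SurjOn h (Ioo a b) univ) :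
    ∃ U : ℝ → ℝ, Continuous U ∧ (∀ z, U z ∈ Ioo a b) ∧ (∀ z, h (U z) = z) ∧
      Tendsto U atBot (𝓝[<] b) ∧ Tendsto U atTop (𝓝[>] a) := by
  set e : Ioo a b → ℝ := fun u => -h u
  have he : StrictMono e := fun u v huv => neg_lt_neg (hanti u.2 v.2 huv)
  have he_surj : Function.Surjective e := fun z => by
    obtain ⟨u, hu, huz⟩ := hsurj (mem_univ (-z))
    exact ⟨⟨u, hu⟩, by simp [e, huz]⟩
  set iso := he.orderIsoOfSurjective e he_surj
  refine ⟨fun z => iso.symm (-z), continuous_subtype_val.comp (iso.symm.continuous.comp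
    continuous_neg), fun z => (iso.symm (-z)).2, fun z => neg_inj.1 (iso.apply_symm_apply (-z)),
    ?_, ?_⟩
  · exact (tendsto_Ioo_atTop ..).1 (iso.symm.tendsto_atTop.comp tendsto_neg_atBot_atTop)
  · exact (tendsto_Ioo_atBot ..).1 (iso.symm.tendsto_atBot.comp tendsto_neg_atTop_atBot)

theorem exists_heteroclinic_of_lipschitzOnWith {F : ℝ → ℝ} {a b : ℝ} {K : ℝ≥0} (hab : a < b)
    (hF : LipschitzOnWith K F (Icc a b)) (ha : F a = 0) (hb : F b = 0)
    (hneg : ∀ u ∈ Ioo a b, F u < 0) :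
    ∃ U : ℝ → ℝ, (∀ z, U z ∈ Ioo a b) ∧ (∀ z, HasDerivAt U (F (U z)) z) ∧
      Tendsto U atBot (𝓝 b) ∧ Tendsto U atTop (𝓝 a) := by
  obtain ⟨c, hc⟩ := nonempty_Ioo.2 hab
  have hdist : ∀ u ∈ Ioo a b, ∀ e ∈ Icc a b, F e = 0 → -F u ≤ K * |u - e| := fun u hu e he hFe => by
    have := hF.dist_le_mul u (Ioo_subset_Icc_self hu) e he
    rw [hFe, Real.dist_eq, Real.dist_eq, sub_zero] at this
    exact (neg_le_abs _).trans this
  set h : ℝ → ℝ := fun u => ∫ v in c..u, (F v)⁻¹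
  have hh : ∀ u ∈ Ioo a b, HasDerivAt h (F u)⁻¹ u :=
    fun u => hasDerivAt_intervalIntegral_of_continuousOn_Ioo
      ((hF.continuousOn.mono Ioo_subset_Icc_self).inv₀ fun v hv => (hneg v hv).ne) hc
  have hanti : StrictAntiOn h (Ioo a b) :=
    strictAntiOn_of_hasDerivWithinAt_neg (convex_Ioo a b)
      (fun u hu => (hh u hu).continuousAt.continuousWithinAt)
      (fun u hu => (hh u (interior_subset hu)).hasDerivWithinAt)
      fun u hu => inv_lt_zero.2 (hneg u (interior_subset hu))
  have htop : Tendsto h (𝓝[>] a) atTop :=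
    tendsto_nhdsGT_atTop_of_hasDerivAt_inv hab hh hneg fun u hu => by
      simpa [abs_of_pos (sub_pos.2 hu.1)] using hdist u hu a (left_mem_Icc.2 hab.le) ha
  have hbot : Tendsto h (𝓝[<] b) atBot :=
    tendsto_nhdsLT_atBot_of_hasDerivAt_inv hab hh hneg fun u hu => by
      simpa [abs_sub_comm, abs_of_pos (sub_pos.2 hu.2)] using
        hdist u hu b (right_mem_Icc.2 hab.le) hb
  have hsurj : SurjOn h (Ioo a b) univ :=
    ContinuousOn.surjOn_of_tendsto' (nonempty_Ioo.2 hab)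
      (fun u hu => (hh u hu).continuousAt.continuousWithinAt)
      ((tendsto_comp_coe_Ioo_atBot hab).2 htop) ((tendsto_comp_coe_Ioo_atTop hab).2 hbot)
  obtain ⟨U, hU, hmem, hhU, hUbot, hUtop⟩ := hanti.exists_rightInverse_of_surjOn hsurj
  refine ⟨U, hmem, fun z => ?_, hUbot.mono_right nhdsWithin_le_nhds,
    hUtop.mono_right nhdsWithin_le_nhds⟩
  simpa using (hh (U z) (hmem z)).of_local_left_inverse hU.continuousAt
    (inv_ne_zero (hneg _ (hmem z)).ne) (Eventually.of_forall hhU)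

/-- Under the generalized shock condition `g < 0` on `(0, u₋)`, there exists a
C¹ shock profile `U` with values in `(0, u₋)` satisfying `U' = U · g(U)`, the far-field
limits `u₋` at `-∞` and `0` at `+∞`, and `U' < 0` everywhere. -/
theorem stmt_2
    (f : ℝ → ℝ) (hf : ContDiff ℝ 1 f)
    (um : ℝ) (hum : 0 < um)
    (s : ℝ) (hs : s = (f um - f 0) / um)
    (g : ℝ → ℝ) (hg : ∀ u, g u = f u - f 0 - s * u)
    (hshock : ∀ u ∈ Set.Ioo 0 um, g u < 0) :
    ∃ U : ℝ → ℝ, ContDiff ℝ 1 U ∧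
      (∀ z, U z ∈ Set.Ioo 0 um) ∧
      (∀ z, deriv U z = U z * g (U z)) ∧
      Tendsto U atBot (nhds um) ∧
      Tendsto U atTop (nhds 0) ∧
      (∀ z, deriv U z < 0) := by
  have hg_smooth : ContDiff ℝ 1 g := by
    rw [show g = fun u => f u - f 0 - s * u from funext hg]
    fun_prop
  have hg_um : g um = 0 := by
    rw [hg, hs]
    field_simp
    ring
  have hF : ContDiff ℝ 1 fun u => u * g u := contDiff_id.mul hg_smooth
  obtain ⟨K, hK⟩ := hF.locallyLipschitz.locallyLipschitzOn.exists_lipschitzOnWith_of_compact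
    (isCompact_Icc (a := 0) (b := um))
  obtain ⟨U, hmem, hU, hUbot, hUtop⟩ := exists_heteroclinic_of_lipschitzOnWith hum hK
    (zero_mul _) (by simp [hg_um]) fun u hu => mul_neg_of_pos_of_neg hu.1 (hshock u hu)
  have hderiv : ∀ z, deriv U z = U z * g (U z) := fun z => (hU z).deriv
  refine ⟨U, ?_, hmem, hderiv, hUbot, hUtop, fun z => ?_⟩
  · refine contDiff_one_iff_deriv.2 ⟨fun z => (hU z).differentiableAt, ?_⟩
    rw [funext hderiv]
    exact hF.continuous.comp (continuous_iff_continuousAt.2 fun z => (hU z).continuousAt)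
  · rw [hderiv]
    exact mul_neg_of_pos_of_neg (hmem z).1 (hshock _ (hmem z))
end

section
/- Let f : ℝ → ℝ be continuously differentiable, let u_- > 0, set s = (f(u_-) - f(0))/u_- and g(u) = f(u) - f(0) - s·u, and assume g(u) < 0 for every u ∈ (0, u_-). If U₁ and U₂ are two continuously differentiable functions ℝ → ℝ, each taking values in (0, u_-), each satisfying U'(z) = U(z)·g(U(z)) for all z ∈ ℝ with limits u_- at -∞ and 0 at +∞, then there exists z₀ ∈ ℝ such that U₂(z) = U₁(z + z₀) for all z ∈ ℝ; i.e., the shock profile is unique up to a shift. -/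
/-!
The ODE `U' = U g(U)` is autonomous with a `C¹` right-hand side, so its solutions are unique
given one value, and translates of solutions are solutions. Since `U₁` runs continuously from
`u₋` to `0`, it takes the value `U₂ 0` at some `z₀`; then `U₂` and `U₁ (· + z₀)` agree at `0`
and hence everywhere.
-/

open Filter Topology Set

theorem eq_of_hasDerivAt_of_contDiff_of_isCompact {E : Type*} [NormedAddCommGroup E]
    [NormedSpace ℝ E] {F : E → E} (hF : ContDiff ℝ 1 F) {K : Set E} (hK : IsCompact K)
    {U V : ℝ → E} (hU : ∀ t, HasDerivAt U (F (U t)) t ∧ U t ∈ K)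
    (hV : ∀ t, HasDerivAt V (F (V t)) t ∧ V t ∈ K) {t₀ : ℝ} (h : U t₀ = V t₀) : U = V := by
  obtain ⟨L, hL⟩ := hF.locallyLipschitz.locallyLipschitzOn.exists_lipschitzOnWith_of_compact hK
  exact ODE_solution_unique_univ (v := fun _ => F) (s := fun _ => K) (fun _ => hL) hU hV h

theorem Continuous.exists_eq_of_tendsto_atBot_atTop {U : ℝ → ℝ} (hU : Continuous U)
    {a b y : ℝ} (hbot : Tendsto U atBot (𝓝 b)) (htop : Tendsto U atTop (𝓝 a))
    (hy : y ∈ Ioo a b) : ∃ w, U w = y :=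
  mem_range_of_exists_le_of_exists_ge hU
    (htop.eventually (eventually_le_nhds hy.1)).exists
    (hbot.eventually (eventually_ge_nhds hy.2)).exists

theorem hasDerivAt_of_contDiff_of_deriv_eq {U : ℝ → ℝ} {F : ℝ → ℝ} (hU : ContDiff ℝ 1 U)
    (hode : ∀ z, deriv U z = F (U z)) (z : ℝ) : HasDerivAt U (F (U z)) z :=
  hode z ▸ (hU.differentiable one_ne_zero z).hasDerivAt

theorem stmt_3_general
    (f : ℝ → ℝ) (hf : ContDiff ℝ 1 f)
    (um : ℝ)
    (s : ℝ)
    (g : ℝ → ℝ) (hg : ∀ u, g u = f u - f 0 - s * u)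
    (U₁ U₂ : ℝ → ℝ)
    (hU₁ : ContDiff ℝ 1 U₁) (hU₂ : ContDiff ℝ 1 U₂)
    (hU₁range : ∀ z, U₁ z ∈ Set.Ioo 0 um)
    (hU₂range : ∀ z, U₂ z ∈ Set.Ioo 0 um)
    (hU₁ode : ∀ z, deriv U₁ z = U₁ z * g (U₁ z))
    (hU₂ode : ∀ z, deriv U₂ z = U₂ z * g (U₂ z))
    (hU₁bot : Tendsto U₁ atBot (nhds um)) (hU₁top : Tendsto U₁ atTop (nhds 0)) :
    ∃ z₀ : ℝ, ∀ z, U₂ z = U₁ (z + z₀) := by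
  have hgC : ContDiff ℝ 1 g := by
    rw [funext hg]
    fun_prop
  have hFC : ContDiff ℝ 1 fun u => u * g u := contDiff_id.mul hgC
  have hU₁' := hasDerivAt_of_contDiff_of_deriv_eq (F := fun u => u * g u) hU₁ hU₁ode
  have hU₂' := hasDerivAt_of_contDiff_of_deriv_eq (F := fun u => u * g u) hU₂ hU₂ode
  obtain ⟨z₀, hz₀⟩ := hU₁.continuous.exists_eq_of_tendsto_atBot_atTop hU₁bot hU₁top (hU₂range 0)
  refine ⟨z₀, congrFun (eq_of_hasDerivAt_of_contDiff_of_isCompact hFC isCompact_Icc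
    (fun t => ⟨hU₂' t, Ioo_subset_Icc_self (hU₂range t)⟩)
    (fun t => ⟨(hU₁' (t + z₀)).comp_add_const t z₀, Ioo_subset_Icc_self (hU₁range (t + z₀))⟩)
    (t₀ := 0) ?_)⟩
  simp [hz₀]

/-- Under the generalized shock condition, any two shock profiles
(C¹ solutions of `U' = U·g(U)` valued in `(0, u₋)` with limits `u₋` at `-∞` and
`0` at `+∞`) coincide up to a translation. -/
theorem stmt_3
    (f : ℝ → ℝ) (hf : ContDiff ℝ 1 f)
    (um : ℝ) (hum : 0 < um)
    (s : ℝ) (hs : s = (f um - f 0) / um)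
    (g : ℝ → ℝ) (hg : ∀ u, g u = f u - f 0 - s * u)
    (hshock : ∀ u ∈ Set.Ioo 0 um, g u < 0)
    (U₁ U₂ : ℝ → ℝ)
    (hU₁ : ContDiff ℝ 1 U₁) (hU₂ : ContDiff ℝ 1 U₂)
    (hU₁range : ∀ z, U₁ z ∈ Set.Ioo 0 um)
    (hU₂range : ∀ z, U₂ z ∈ Set.Ioo 0 um)
    (hU₁ode : ∀ z, deriv U₁ z = U₁ z * g (U₁ z))
    (hU₂ode : ∀ z, deriv U₂ z = U₂ z * g (U₂ z))
    (hU₁bot : Tendsto U₁ atBot (nhds um)) (hU₁top : Tendsto U₁ atTop (nhds 0))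
    (hU₂bot : Tendsto U₂ atBot (nhds um)) (hU₂top : Tendsto U₂ atTop (nhds 0)) :
    ∃ z₀ : ℝ, ∀ z, U₂ z = U₁ (z + z₀) :=
  stmt_3_general f hf um s g hg U₁ U₂ hU₁ hU₂ hU₁range hU₂range hU₁ode hU₂ode hU₁bot hU₁top
end

section
/- Let U be a shock profile and assume the nondegenerate condition f'(0) < s at the right state, i.e., g'(0) = f'(0) - s < 0. Then z·U(z) → 1/(s - f'(0)) as z → +∞; in particular U(z) decays to 0 at the algebraic rate |z|^{-1} as z → +∞. -/
open Filter Topology Asymptotics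

/-!
Since `U → 0` and `g(u)/u → g'(0) = -(s - f'(0))`, the reciprocal `V = 1/U` satisfies
`V' = -g(U)/U → s - f'(0)`. A function whose derivative tends to `L` grows like `L z`
(mean value theorem applied to `V - L z`), so `V(z)/z → s - f'(0)`, i.e.
`z U(z) → 1/(s - f'(0))`.
-/

theorem isLittleO_id_atTop_of_tendsto_deriv_zero {E : Type*} [NormedAddCommGroup E]
    [NormedSpace ℝ E] {W W' : ℝ → E} (hW : ∀ᶠ x in atTop, HasDerivAt W (W' x) x)
    (hW' : Tendsto W' atTop (𝓝 0)) : W =o[atTop] id := by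
  refine isLittleO_iff.2 fun c hc => ?_
  obtain ⟨a, ha⟩ := eventually_atTop.1
    (hW.and (hW'.eventually (Metric.closedBall_mem_nhds 0 (half_pos hc))))
  have hslope : ∀ x ≥ a, ‖W x - W a‖ ≤ c / 2 * (x - a) := fun x hx => by
    simpa [Real.norm_of_nonneg (sub_nonneg.2 hx)] using
      (convex_Ici a).norm_image_sub_le_of_norm_hasDerivWithin_le
        (fun y hy => (ha y hy).1.hasDerivWithinAt)
        (fun y hy => mem_closedBall_zero_iff.1 (ha y hy).2) Set.self_mem_Ici hx
  filter_upwards [eventually_ge_atTop a, eventually_ge_atTop 0,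
    (isLittleO_const_id_atTop (‖W a‖ + c / 2 * |a|)).def (half_pos hc)] with x hxa hx0 hconst
  rw [Real.norm_of_nonneg (by positivity)] at hconst
  calc ‖W x‖ ≤ ‖W a‖ + ‖W x - W a‖ := norm_le_insert' _ _
    _ ≤ ‖W a‖ + c / 2 * (x - a) := by gcongr; exact hslope x hxa
    _ ≤ ‖W a‖ + c / 2 * |a| + c / 2 * x := by nlinarith [neg_abs_le a]
    _ ≤ c * ‖id x‖ := by simp only [id, Real.norm_of_nonneg hx0] at hconst ⊢; linarith

theorem tendsto_div_id_atTop_of_tendsto_deriv {V V' : ℝ → ℝ} {L : ℝ}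
    (hV : ∀ᶠ x in atTop, HasDerivAt V (V' x) x) (hV' : Tendsto V' atTop (𝓝 L)) :
    Tendsto (fun x => V x / x) atTop (𝓝 L) := by
  have hW : (fun x => V x - L * x) =o[atTop] id := by
    refine isLittleO_id_atTop_of_tendsto_deriv_zero (W' := fun x => V' x - L) ?_ ?_
    · filter_upwards [hV] with x hx
      exact hx.sub ((hasDerivAt_id x).const_mul L) |>.congr_deriv (by simp)
    · simpa using hV'.sub_const L
  have := hW.tendsto_div_nhds_zero.add_const L
  rw [zero_add] at this
  refine this.congr' ?_
  filter_upwards [eventually_ne_atTop 0] with x hx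
  simp only [id]
  field_simp
  ring

theorem tendsto_div_self_nhdsNE_of_hasDerivAt {g : ℝ → ℝ} {c : ℝ} (hg : HasDerivAt g c 0)
    (hg0 : g 0 = 0) : Tendsto (fun u => g u / u) (𝓝[≠] 0) (𝓝 c) := by
  simpa [hg0, div_eq_inv_mul] using hg.tendsto_slope_zero

theorem tendsto_id_mul_of_hasDerivAt_mul_comp {U g : ℝ → ℝ} {c : ℝ}
    (hU : ∀ᶠ z in atTop, HasDerivAt U (U z * g (U z)) z) (hUne : ∀ᶠ z in atTop, U z ≠ 0)
    (hUtop : Tendsto U atTop (𝓝 0)) (hg : HasDerivAt g (-c) 0) (hg0 : g 0 = 0) (hc : c ≠ 0) :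
    Tendsto (fun z => z * U z) atTop (𝓝 c⁻¹) := by
  have hU0 : Tendsto U atTop (𝓝[≠] 0) :=
    tendsto_nhdsWithin_of_tendsto_nhds_of_eventually_within _ hUtop hUne
  have hinv : ∀ᶠ z in atTop, HasDerivAt (fun z => (U z)⁻¹) (-(g (U z) / U z)) z := by
    filter_upwards [hU, hUne] with z hz hz0
    exact (hz.inv hz0).congr_deriv (by field_simp)
  have hrate : Tendsto (fun z => -(g (U z) / U z)) atTop (𝓝 c) := by
    simpa using ((tendsto_div_self_nhdsNE_of_hasDerivAt hg hg0).comp hU0).neg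
  refine ((tendsto_div_id_atTop_of_tendsto_deriv hinv hrate).inv₀ hc).congr fun z => ?_
  rw [inv_div, div_inv_eq_mul]

theorem stmt_4_general
    (f : ℝ → ℝ) (hf : ContDiff ℝ 1 f)
    (um : ℝ)
    (s : ℝ)
    (g : ℝ → ℝ) (hg : ∀ u, g u = f u - f 0 - s * u)
    (U : ℝ → ℝ) (hU : ContDiff ℝ 1 U)
    (hUrange : ∀ z, U z ∈ Set.Ioo 0 um)
    (hUode : ∀ z, deriv U z = U z * g (U z))
    (hUtop : Tendsto U atTop (nhds 0))
    (hnd : deriv f 0 < s) :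
    Tendsto (fun z => z * U z) atTop (nhds (1 / (s - deriv f 0))) := by
  have hgf : g = fun u => f u - f 0 - s * u := funext hg
  have hg' : HasDerivAt g (-(s - deriv f 0)) 0 := by
    rw [hgf, neg_sub]
    exact ((hf.differentiable one_ne_zero 0).hasDerivAt.sub_const (f 0)).sub
      ((hasDerivAt_id 0).const_mul s) |>.congr_deriv (by simp)
  have hU' : ∀ z, HasDerivAt U (U z * g (U z)) z := fun z =>
    hUode z ▸ (hU.differentiable one_ne_zero z).hasDerivAt
  rw [one_div]
  exact tendsto_id_mul_of_hasDerivAt_mul_comp (.of_forall hU')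
    (.of_forall fun z => (hUrange z).1.ne') hUtop hg' (by simp [hgf]) (sub_pos.2 hnd).ne'

/-- For a shock profile `U` with the nondegenerate condition `f'(0) < s`
at the right state (i.e. `g'(0) = f'(0) - s < 0`), one has
`z · U(z) → 1/(s - f'(0))` as `z → +∞`, so `U` decays like `|z|⁻¹`. -/
theorem stmt_4
    (f : ℝ → ℝ) (hf : ContDiff ℝ 1 f)
    (um : ℝ) (hum : 0 < um)
    (s : ℝ) (hs : s = (f um - f 0) / um)
    (g : ℝ → ℝ) (hg : ∀ u, g u = f u - f 0 - s * u)
    (U : ℝ → ℝ) (hU : ContDiff ℝ 1 U)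
    (hUrange : ∀ z, U z ∈ Set.Ioo 0 um)
    (hUode : ∀ z, deriv U z = U z * g (U z))
    (hUbot : Tendsto U atBot (nhds um))
    (hUtop : Tendsto U atTop (nhds 0))
    (hnd : deriv f 0 < s) :
    Tendsto (fun z => z * U z) atTop (nhds (1 / (s - deriv f 0))) :=
  stmt_4_general f hf um s g hg U hU hUrange hUode hUtop hnd
end

section
/- Let f be twice continuously differentiable, let U be a shock profile, and assume the nondegenerate condition s < f'(u_-) at the left state, i.e., g'(u_-) = f'(u_-) - s > 0. Set λ = u_-·(f'(u_-) - s). Then the limit L = lim_{z → -∞} e^{-λ z}·(u_- - U(z)) exists and is a positive real number; in particular there are constants 0 < C₁ ≤ C₂ with C₁·e^{λ z} ≤ u_- - U(z) ≤ C₂·e^{λ z} for all z ≤ 0. -/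
/-!
Write `V = u₋ - U > 0`. Since `g(u₋) = 0` and `g'(u₋) = f'(u₋) - s`, a second-order Taylor
expansion of `g` at `u₋` turns the profile equation into `V'/V = λ + O(V)`. As `V → 0` at `-∞`,
eventually `V'/V ≥ λ/2`, so `V = O(e^{λz/2})`; the error term is then integrable at `-∞`, hence
`log V - λz` converges and `e^{-λz} V → L > 0`. A positive continuous function with a positive
limit at `-∞` is bounded above and below by positive constants on `(-∞, 0]`.
-/

open Filter Set Real Topology

lemma monotoneOn_Iic_of_hasDerivAt_nonneg {f f' : ℝ → ℝ} {z₀ : ℝ}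
    (hf : ∀ z ≤ z₀, HasDerivAt f (f' z) z) (hf' : ∀ z ≤ z₀, 0 ≤ f' z) :
    MonotoneOn f (Iic z₀) :=
  monotoneOn_of_hasDerivWithinAt_nonneg (convex_Iic z₀)
    (fun z hz => (hf z hz).continuousAt.continuousWithinAt)
    (fun z hz => by rw [interior_Iic] at hz ⊢; exact (hf z hz.le).hasDerivWithinAt)
    (fun z hz => by rw [interior_Iic] at hz; exact hf' z hz.le)

lemma MonotoneOn.exists_tendsto_atBot_of_Iic {ψ : ℝ → ℝ} {z₀ c : ℝ}
    (hmono : MonotoneOn ψ (Iic z₀)) (hbdd : ∀ z ≤ z₀, c ≤ ψ z) :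
    ∃ l, Tendsto ψ atBot (𝓝 l) := by
  set Ψ : ℝ → ℝ := fun z => ψ (min z z₀)
  have hΨ : Monotone Ψ := fun x y hxy =>
    hmono (min_le_right x z₀) (min_le_right y z₀) (min_le_min hxy le_rfl)
  have hΨbdd : BddBelow (range Ψ) := ⟨c, by rintro _ ⟨z, rfl⟩; exact hbdd _ (min_le_right z z₀)⟩
  refine ⟨⨅ z, Ψ z, (tendsto_atBot_ciInf hΨ hΨbdd).congr' ?_⟩
  filter_upwards [eventually_le_atBot z₀] with z hz
  simp [Ψ, min_eq_left hz]

/-- Comparison test for the improper integral `∫_{-∞} h'`. -/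
lemma exists_tendsto_atBot_of_abs_deriv_le {h h' k k' : ℝ → ℝ} {z₀ c : ℝ}
    (hh : ∀ z ≤ z₀, HasDerivAt h (h' z) z) (hk : ∀ z ≤ z₀, HasDerivAt k (k' z) z)
    (hle : ∀ z ≤ z₀, |h' z| ≤ k' z) (hkc : Tendsto k atBot (𝓝 c)) :
    ∃ l, Tendsto h atBot (𝓝 l) := by
  have hk_mono : MonotoneOn k (Iic z₀) :=
    monotoneOn_Iic_of_hasDerivAt_nonneg hk fun z hz => (abs_nonneg _).trans (hle z hz)
  have hk_ge : ∀ z ≤ z₀, c ≤ k z := fun z hz =>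
    le_of_tendsto hkc (eventually_atBot.2 ⟨z, fun x hx => hk_mono (hx.trans hz) hz hx⟩)
  have hsum : MonotoneOn (fun z => h z + k z) (Iic z₀) :=
    monotoneOn_Iic_of_hasDerivAt_nonneg (fun z hz => (hh z hz).add (hk z hz))
      fun z hz => by linarith [neg_abs_le (h' z), hle z hz]
  have hdiff : MonotoneOn (fun z => k z - h z) (Iic z₀) :=
    monotoneOn_Iic_of_hasDerivAt_nonneg (fun z hz => (hk z hz).sub (hh z hz))
      fun z hz => by linarith [le_abs_self (h' z), hle z hz]
  obtain ⟨l, hl⟩ := hsum.exists_tendsto_atBot_of_Iic (c := 2 * c - (k z₀ - h z₀))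
    fun z hz => by linarith [hdiff hz self_mem_Iic hz, hk_ge z hz]
  exact ⟨l - c, (hl.sub hkc).congr fun z => by ring⟩

lemma monotoneOn_exp_neg_mul_mul_of_mul_le_deriv {V V' : ℝ → ℝ} {μ z₀ : ℝ}
    (hV : ∀ z ≤ z₀, HasDerivAt V (V' z) z) (hV' : ∀ z ≤ z₀, μ * V z ≤ V' z) :
    MonotoneOn (fun z => exp (-(μ * z)) * V z) (Iic z₀) := by
  have hexp : ∀ z, HasDerivAt (fun z => exp (-(μ * z))) (exp (-(μ * z)) * -μ) z := fun z => by
    simpa using ((hasDerivAt_id z).const_mul μ).neg.exp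
  refine monotoneOn_Iic_of_hasDerivAt_nonneg (fun z hz => (hexp z).mul (hV z hz)) fun z hz => ?_
  have := mul_le_mul_of_nonneg_left (hV' z hz) (exp_pos (-(μ * z))).le
  linarith

lemma exists_abs_sub_sub_deriv_mul_le_sq {φ : ℝ → ℝ} (hφ : ContDiff ℝ 2 φ) (a b : ℝ) :
    ∃ K, ∀ u ∈ Icc a b, |φ u - φ b - deriv φ b * (u - b)| ≤ K * (u - b) ^ 2 := by
  have hφ' : ContDiff ℝ 1 (deriv φ) := hφ.deriv'
  obtain ⟨K, hK⟩ := isCompact_Icc.exists_bound_of_continuousOn (s := Icc a b)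
    (hφ'.continuous_deriv le_rfl).continuousOn
  refine ⟨K, fun u hu => ?_⟩
  have hK0 : 0 ≤ K := (norm_nonneg _).trans (hK u hu)
  have hlip : ∀ t ∈ Icc u b, ‖deriv φ t - deriv φ b‖ ≤ K * (b - u) := fun t ht => by
    have := Convex.norm_image_sub_le_of_norm_hasDerivWithin_le
      (fun x _ => ((hφ'.differentiable one_ne_zero) x).hasDerivAt.hasDerivWithinAt) hK
      (convex_Icc a b) (right_mem_Icc.2 (hu.1.trans hu.2)) ⟨hu.1.trans ht.1, ht.2⟩
    refine this.trans (mul_le_mul_of_nonneg_left ?_ hK0)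
    rw [Real.norm_eq_abs, abs_of_nonpos (by linarith [ht.2])]
    linarith [ht.1]
  have := Convex.norm_image_sub_le_of_norm_hasDerivWithin_le
    (f := fun t => φ t - deriv φ b * t)
    (fun t _ => (((hφ.differentiable two_ne_zero) t).hasDerivAt.sub
      (hasDerivAt_const_mul (deriv φ b))).hasDerivWithinAt) hlip
    (convex_Icc u b) (right_mem_Icc.2 hu.2) (left_mem_Icc.2 hu.2)
  rw [Real.norm_eq_abs, Real.norm_eq_abs, abs_of_nonpos (a := u - b) (by linarith [hu.2])] at this
  calc |φ u - φ b - deriv φ b * (u - b)|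
      = |φ u - deriv φ b * u - (φ b - deriv φ b * b)| := by ring_nf
    _ ≤ K * (b - u) * -(u - b) := this
    _ = K * (u - b) ^ 2 := by ring

section LogDerivative

variable {V V' : ℝ → ℝ} {lam K : ℝ}

lemma exists_le_mul_exp_of_abs_logDeriv_sub_le (hlam : 0 < lam) (hVpos : ∀ z, 0 < V z)
    (hV : ∀ z, HasDerivAt V (V' z) z) (hV0 : Tendsto V atBot (𝓝 0))
    (hest : ∀ z, |V' z / V z - lam| ≤ K * V z) :
    ∃ z₀ C, ∀ z ≤ z₀, V z ≤ C * exp (lam / 2 * z) := by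
  have hKV : Tendsto (fun z => K * V z) atBot (𝓝 0) := by simpa using hV0.const_mul K
  obtain ⟨z₀, hz₀⟩ := eventually_atBot.1 (hKV.eventually_lt_const (half_pos hlam))
  have hmono := monotoneOn_exp_neg_mul_mul_of_mul_le_deriv (μ := lam / 2) (z₀ := z₀)
    (fun z _ => hV z) fun z hz => by
      have : lam / 2 ≤ V' z / V z := by linarith [(abs_le.1 (hest z)).1, hz₀ z hz]
      rw [le_div_iff₀ (hVpos z)] at this; linarith
  refine ⟨z₀, exp (-(lam / 2 * z₀)) * V z₀, fun z hz => ?_⟩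
  calc V z = exp (lam / 2 * z) * (exp (-(lam / 2 * z)) * V z) := by
        rw [← mul_assoc, ← exp_add, add_neg_cancel, exp_zero, one_mul]
    _ ≤ exp (lam / 2 * z) * (exp (-(lam / 2 * z₀)) * V z₀) :=
        mul_le_mul_of_nonneg_left (hmono hz self_mem_Iic hz) (exp_pos _).le
    _ = _ := by ring

theorem exists_tendsto_exp_neg_mul_mul_of_abs_logDeriv_sub_le (hlam : 0 < lam)
    (hVpos : ∀ z, 0 < V z) (hV : ∀ z, HasDerivAt V (V' z) z) (hV0 : Tendsto V atBot (𝓝 0))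
    (hest : ∀ z, |V' z / V z - lam| ≤ K * V z) :
    ∃ L, 0 < L ∧ Tendsto (fun z => exp (-(lam * z)) * V z) atBot (𝓝 L) := by
  obtain ⟨z₀, C, hC⟩ := exists_le_mul_exp_of_abs_logDeriv_sub_le hlam hVpos hV hV0 hest
  set μ := lam / 2
  have hμ : μ ≠ 0 := (half_pos hlam).ne'
  have hK : 0 ≤ K := (mul_nonneg_iff_of_pos_right (hVpos 0)).1 ((abs_nonneg _).trans (hest 0))
  have hexp : ∀ z, HasDerivAt (fun z => exp (μ * z)) (exp (μ * z) * μ) z := fun z => by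
    simpa using ((hasDerivAt_id z).const_mul μ).exp
  obtain ⟨l, hl⟩ := exists_tendsto_atBot_of_abs_deriv_le (z₀ := z₀)
    (h := fun z => log (V z) - lam * z) (h' := fun z => V' z / V z - lam)
    (k := fun z => K * C / μ * exp (μ * z)) (k' := fun z => K * C * exp (μ * z))
    (fun z _ => ((hV z).log (hVpos z).ne').sub (hasDerivAt_const_mul lam))
    (fun z _ => ((hexp z).const_mul (K * C / μ)).congr_deriv (by field_simp))
    (fun z hz => (hest z).trans (by rw [mul_assoc]; gcongr; exact hC z hz))
    (by simpa using (tendsto_exp_atBot.comp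
      (tendsto_id.const_mul_atBot (half_pos hlam))).const_mul (K * C / μ))
  refine ⟨exp l, exp_pos l, ((continuous_exp.tendsto l).comp hl).congr fun z => ?_⟩
  simp [exp_sub, exp_log (hVpos z), exp_neg, div_eq_mul_inv, mul_comm]

end LogDerivative

lemma abs_neg_mul_div_sub_mul_le {u um y a K : ℝ} (hu : u ∈ Ioo 0 um) (ha : 0 ≤ a)
    (hy : |y - a * (u - um)| ≤ K * (u - um) ^ 2) :
    |-(u * y) / (um - u) - um * a| ≤ (a + um * K) * (um - u) := by
  have hV : 0 < um - u := sub_pos.2 hu.2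
  have hid : -(u * y) / (um - u) - um * a
      = -(a * (um - u)) - u * (y - a * (u - um)) / (um - u) := by
    field_simp; ring
  have hR : |u * (y - a * (u - um)) / (um - u)| ≤ um * K * (um - u) := by
    rw [abs_div, abs_mul, abs_of_pos hu.1, abs_of_pos hV, div_le_iff₀ hV]
    calc u * |y - a * (u - um)| ≤ um * (K * (u - um) ^ 2) :=
          mul_le_mul hu.2.le hy (abs_nonneg _) (hu.1.trans hu.2).le
      _ = um * K * (um - u) * (um - u) := by ring
  rw [hid]
  calc |-(a * (um - u)) - u * (y - a * (u - um)) / (um - u)|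
      ≤ |-(a * (um - u))| + |u * (y - a * (u - um)) / (um - u)| := abs_sub _ _
    _ ≤ a * (um - u) + um * K * (um - u) := by
        rw [abs_neg, abs_of_nonneg (mul_nonneg ha hV.le)]; gcongr
    _ = (a + um * K) * (um - u) := by ring

lemma exists_pos_bounds_Iic_of_tendsto_atBot {φ : ℝ → ℝ} {L : ℝ} (hφ : Continuous φ)
    (hpos : ∀ z, 0 < φ z) (hL : 0 < L) (hlim : Tendsto φ atBot (𝓝 L)) (b : ℝ) :
    ∃ C₁ C₂, 0 < C₁ ∧ C₁ ≤ C₂ ∧ ∀ z ≤ b, C₁ ≤ φ z ∧ φ z ≤ C₂ := by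
  obtain ⟨z₁, hz₁⟩ := eventually_atBot.1 ((hlim.eventually_const_lt (half_lt_self hL)).and
    (hlim.eventually_lt_const (lt_two_mul_self hL)))
  have hne : (Icc (min z₁ b) b).Nonempty := nonempty_Icc.2 (min_le_right _ _)
  obtain ⟨p, -, hpmin⟩ := isCompact_Icc.exists_isMinOn hne hφ.continuousOn
  obtain ⟨q, -, hqmax⟩ := isCompact_Icc.exists_isMaxOn hne hφ.continuousOn
  have hbd : ∀ z ≤ b, min (L / 2) (φ p) ≤ φ z ∧ φ z ≤ max (2 * L) (φ q) := fun z hz => by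
    rcases le_or_gt z (min z₁ b) with hz' | hz'
    · have h := hz₁ z (hz'.trans (min_le_left _ _))
      exact ⟨(min_le_left _ _).trans h.1.le, h.2.le.trans (le_max_left _ _)⟩
    · exact ⟨(min_le_right _ _).trans (hpmin ⟨hz'.le, hz⟩),
        (hqmax ⟨hz'.le, hz⟩).trans (le_max_right _ _)⟩
  exact ⟨_, _, lt_min (half_pos hL) (hpos p), (hbd b le_rfl).1.trans (hbd b le_rfl).2, hbd⟩

theorem stmt_5_general
    (f : ℝ → ℝ) (hf : ContDiff ℝ 2 f)
    (um : ℝ) (hum : 0 < um)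
    (s : ℝ) (hs : s = (f um - f 0) / um)
    (g : ℝ → ℝ) (hg : ∀ u, g u = f u - f 0 - s * u)
    (U : ℝ → ℝ) (hU : ContDiff ℝ 1 U)
    (hUrange : ∀ z, U z ∈ Set.Ioo 0 um)
    (hUode : ∀ z, deriv U z = U z * g (U z))
    (hUbot : Tendsto U atBot (nhds um))
    (hnd : 0 < deriv f um - s)
    (lam : ℝ) (hlam : lam = um * (deriv f um - s)) :
    ∃ L : ℝ, 0 < L ∧
      Tendsto (fun z => Real.exp (-(lam * z)) * (um - U z)) atBot (nhds L) ∧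
      ∃ C₁ C₂ : ℝ, 0 < C₁ ∧ C₁ ≤ C₂ ∧
        ∀ z ≤ (0 : ℝ), C₁ * Real.exp (lam * z) ≤ um - U z ∧
          um - U z ≤ C₂ * Real.exp (lam * z) := by
  have hg_eq : g = fun u => f u - f 0 - s * u := funext hg
  have hg_um : g um = 0 := by rw [hg, hs]; field_simp; ring
  have hg'_um : deriv g um = deriv f um - s := by
    rw [hg_eq]
    exact (((hf.differentiable two_ne_zero um).hasDerivAt.sub_const _).sub
      (hasDerivAt_const_mul s)).deriv
  have hg2 : ContDiff ℝ 2 g := by rw [hg_eq]; fun_prop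
  obtain ⟨K, hK⟩ := exists_abs_sub_sub_deriv_mul_le_sq hg2 0 um
  have hVpos : ∀ z, 0 < um - U z := fun z => sub_pos.2 (hUrange z).2
  obtain ⟨L, hL, hlim⟩ := exists_tendsto_exp_neg_mul_mul_of_abs_logDeriv_sub_le
    (V := fun z => um - U z) (V' := fun z => -(U z * g (U z))) (K := deriv f um - s + um * K)
    (hlam ▸ mul_pos hum hnd) hVpos
    (fun z => hUode z ▸ ((hU.differentiable one_ne_zero z).hasDerivAt).const_sub um)
    (by simpa using (tendsto_const_nhds (x := um)).sub hUbot)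
    fun z => hlam ▸ abs_neg_mul_div_sub_mul_le (hUrange z) hnd.le
      (by simpa [hg_um, hg'_um] using hK (U z) (Ioo_subset_Icc_self (hUrange z)))
  obtain ⟨C₁, C₂, hC₁, hC₁₂, hC⟩ := exists_pos_bounds_Iic_of_tendsto_atBot
    (by fun_prop) (fun z => mul_pos (exp_pos _) (hVpos z)) hL hlim 0
  refine ⟨L, hL, hlim, C₁, C₂, hC₁, hC₁₂, fun z hz => ?_⟩
  have hV : um - U z = exp (-(lam * z)) * (um - U z) * exp (lam * z) := by
    rw [mul_right_comm, ← exp_add, neg_add_cancel, exp_zero, one_mul]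
  rw [hV]
  exact ⟨mul_le_mul_of_nonneg_right (hC z hz).1 (exp_pos _).le,
    mul_le_mul_of_nonneg_right (hC z hz).2 (exp_pos _).le⟩

/-- For a shock profile `U` with the nondegenerate condition `s < f'(u₋)`
at the left state, setting `λ = u₋·(f'(u₋) - s)`, the limit
`L = lim_{z → -∞} e^{-λz}·(u₋ - U(z))` exists, is positive, and consequently
`C₁·e^{λz} ≤ u₋ - U(z) ≤ C₂·e^{λz}` for all `z ≤ 0` with some `0 < C₁ ≤ C₂`. -/
theorem stmt_5
    (f : ℝ → ℝ) (hf : ContDiff ℝ 2 f)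
    (um : ℝ) (hum : 0 < um)
    (s : ℝ) (hs : s = (f um - f 0) / um)
    (g : ℝ → ℝ) (hg : ∀ u, g u = f u - f 0 - s * u)
    (U : ℝ → ℝ) (hU : ContDiff ℝ 1 U)
    (hUrange : ∀ z, U z ∈ Set.Ioo 0 um)
    (hUode : ∀ z, deriv U z = U z * g (U z))
    (hUbot : Tendsto U atBot (nhds um))
    (hUtop : Tendsto U atTop (nhds 0))
    (hnd : 0 < deriv f um - s)
    (lam : ℝ) (hlam : lam = um * (deriv f um - s)) :
    ∃ L : ℝ, 0 < L ∧
      Tendsto (fun z => Real.exp (-(lam * z)) * (um - U z)) atBot (nhds L) ∧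
      ∃ C₁ C₂ : ℝ, 0 < C₁ ∧ C₁ ≤ C₂ ∧
        ∀ z ≤ (0 : ℝ), C₁ * Real.exp (lam * z) ≤ um - U z ∧
          um - U z ≤ C₂ * Real.exp (lam * z) :=
  stmt_5_general f hf um hum s hs g hg U hU hUrange hUode hUbot hnd lam hlam
end

section
/- Let k₊ ≥ 1 be an integer, let f be (k₊+1)-times continuously differentiable, and let U be a shock profile. Assume the degenerate condition at the right state: g^{(j)}(0) = 0 for 1 ≤ j ≤ k₊ and g^{(k₊+1)}(0) ≠ 0 (in particular f'(0) = s). Then there exist constants 0 < C₁ ≤ C₂ such that C₁·(1+z)^{-1/(1+k₊)} ≤ U(z) ≤ C₂·(1+z)^{-1/(1+k₊)} for all z ≥ 0. -/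
/-!
Since `g` vanishes to order `k` at `0`, Taylor's theorem gives `g u / u ^ (k + 1) → L / (k + 1)!`
as `u → 0⁺`, where `L = g⁽ᵏ⁺¹⁾(0) ≠ 0`. Along the profile, `V = U ^ (-(k + 1))` therefore satisfies
`V' = -(k + 1) g(U) / U ^ (k + 1) → -(k + 1) L / (k + 1)!`. As `U → 0⁺` forces `V → ∞`, this limit
is positive, so `V` grows linearly: `V z ≍ 1 + z` on `[0, ∞)`, which is the claimed decay of `U`.
-/

open Filter Set Topology

theorem exists_eq_iteratedDeriv_mul_pow_of_iteratedDeriv_eq_zero {f : ℝ → ℝ} {n : ℕ}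
    (hf : ContDiff ℝ (n + 1) f) {x₀ x : ℝ} (hx : x₀ ≠ x)
    (h₀ : ∀ j ≤ n, iteratedDeriv j f x₀ = 0) :
    ∃ x' ∈ uIoo x₀ x,
      f x = iteratedDeriv (n + 1) f x' * (x - x₀) ^ (n + 1) / (n + 1).factorial := by
  obtain ⟨x', hx', h⟩ := taylor_mean_remainder_lagrange_iteratedDeriv hx hf.contDiffOn
  refine ⟨x', hx', ?_⟩
  have htaylor : taylorWithinEval f n (uIcc x₀ x) x₀ x = 0 := by
    refine (taylor_within_apply _ _ _ _ _).trans (Finset.sum_eq_zero fun j hj => ?_)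
    rw [iteratedDerivWithin_eq_iteratedDeriv (uniqueDiffOn_uIcc hx)
      (hf.contDiffAt.of_le (by exact_mod_cast (Finset.mem_range.1 hj).le)) left_mem_uIcc,
      h₀ j (Nat.lt_succ_iff.1 (Finset.mem_range.1 hj)), smul_zero]
  rwa [htaylor, sub_zero] at h

theorem tendsto_div_pow_of_iteratedDeriv_eq_zero {f : ℝ → ℝ} {n : ℕ}
    (hf : ContDiff ℝ (n + 1) f) {x₀ : ℝ} (h₀ : ∀ j ≤ n, iteratedDeriv j f x₀ = 0) :
    Tendsto (fun x => f x / (x - x₀) ^ (n + 1)) (𝓝[≠] x₀)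
      (𝓝 (iteratedDeriv (n + 1) f x₀ / (n + 1).factorial)) := by
  choose! ξ hξ hfξ using fun x (hx : x ≠ x₀) =>
    exists_eq_iteratedDeriv_mul_pow_of_iteratedDeriv_eq_zero hf hx.symm h₀
  have hξ_tendsto : Tendsto ξ (𝓝[≠] x₀) (𝓝 x₀) := by
    have hmin : Tendsto (fun x => min x₀ x) (𝓝[≠] x₀) (𝓝 x₀) :=
      ((continuous_const.min continuous_id).tendsto' x₀ x₀ (min_self x₀)).mono_left
        nhdsWithin_le_nhds
    have hmax : Tendsto (fun x => max x₀ x) (𝓝[≠] x₀) (𝓝 x₀) :=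
      ((continuous_const.max continuous_id).tendsto' x₀ x₀ (max_self x₀)).mono_left
        nhdsWithin_le_nhds
    refine tendsto_of_tendsto_of_tendsto_of_le_of_le' hmin hmax ?_ ?_ <;>
      filter_upwards [self_mem_nhdsWithin] with x hx
    exacts [(hξ x hx).1.le, (hξ x hx).2.le]
  have hcont : Continuous (iteratedDeriv (n + 1) f) := hf.continuous_iteratedDeriv _ le_rfl
  refine ((hcont.tendsto x₀).comp hξ_tendsto).div_const _ |>.congr' ?_
  filter_upwards [self_mem_nhdsWithin] with x hx
  have : (x - x₀) ^ (n + 1) ≠ 0 := pow_ne_zero _ (sub_ne_zero.2 hx)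
  simp only [Function.comp_apply, hfξ x hx]
  field_simp

theorem nonneg_of_tendsto_deriv_of_tendsto_atTop {V : ℝ → ℝ} {l : ℝ} (hV : Differentiable ℝ V)
    (hV_top : Tendsto V atTop atTop) (hV' : Tendsto (deriv V) atTop (𝓝 l)) : 0 ≤ l := by
  by_contra! hl
  obtain ⟨z₀, hz₀⟩ := eventually_atTop.1 (hV'.eventually (eventually_le_nhds hl))
  obtain ⟨z, hz, hVz⟩ := ((eventually_ge_atTop z₀).and (hV_top.eventually_gt_atTop (V z₀))).exists
  have := (convex_Ici z₀).image_sub_le_mul_sub_of_deriv_le hV.continuous.continuousOn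
    hV.differentiableOn (fun x hx => hz₀ x (interior_subset hx)) z₀ self_mem_Ici z hz hz
  linarith

theorem exists_linear_bounds_of_eventually_deriv_mem_Icc {V : ℝ → ℝ} {a b : ℝ}
    (hV : Differentiable ℝ V) (hpos : ∀ z, 0 < V z) (ha : 0 < a)
    (hV' : ∀ᶠ z in atTop, deriv V z ∈ Icc a b) :
    ∃ A B : ℝ, 0 < A ∧ A ≤ B ∧ ∀ z, 0 ≤ z → A * (1 + z) ≤ V z ∧ V z ≤ B * (1 + z) := by
  obtain ⟨z₁, hz₁⟩ := eventually_atTop.1 (hV'.and (eventually_ge_atTop 0))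
  have hz₁0 : 0 ≤ z₁ := (hz₁ z₁ le_rfl).2
  have hcont : ContinuousOn (fun z => V z / (1 + z)) (Icc 0 z₁) :=
    hV.continuous.continuousOn.div (by fun_prop) fun z hz =>
      (by linarith [hz.1] : (0 : ℝ) < 1 + z).ne'
  obtain ⟨zm, hzm, hm⟩ := isCompact_Icc.exists_isMinOn (nonempty_Icc.2 hz₁0) hcont
  obtain ⟨zM, -, hM⟩ := isCompact_Icc.exists_isMaxOn (nonempty_Icc.2 hz₁0) hcont
  set m := V zm / (1 + zm)
  set M := V zM / (1 + zM)
  have hmM : m ≤ M := (hm (left_mem_Icc.2 hz₁0)).trans (hM (left_mem_Icc.2 hz₁0))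
  have hcompact : ∀ z ∈ Icc 0 z₁, m * (1 + z) ≤ V z ∧ V z ≤ M * (1 + z) := fun z hz =>
    have h1z : 0 < 1 + z := by linarith [hz.1]
    ⟨(le_div_iff₀ h1z).1 (hm hz), (div_le_iff₀ h1z).1 (hM hz)⟩
  have htail : ∀ z ≥ z₁, a * (z - z₁) ≤ V z - V z₁ ∧ V z - V z₁ ≤ b * (z - z₁) := fun z hz =>
    have hderiv x (hx : x ∈ interior (Ici z₁)) := (hz₁ x (interior_subset hx)).1
    ⟨(convex_Ici z₁).mul_sub_le_image_sub_of_le_deriv hV.continuous.continuousOn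
        hV.differentiableOn (fun x hx => (hderiv x hx).1) z₁ self_mem_Ici z hz hz,
      (convex_Ici z₁).image_sub_le_mul_sub_of_deriv_le hV.continuous.continuousOn
        hV.differentiableOn (fun x hx => (hderiv x hx).2) z₁ self_mem_Ici z hz hz⟩
  have hmpos : 0 < m := div_pos (hpos zm) (by linarith [hzm.1])
  refine ⟨min m a, max M b, lt_min hmpos ha, (min_le_left _ _).trans (hmM.trans (le_max_left _ _)),
    fun z hz => ?_⟩
  rcases le_total z z₁ with hzz₁ | hzz₁
  · obtain ⟨h1, h2⟩ := hcompact z ⟨hz, hzz₁⟩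
    exact ⟨(mul_le_mul_of_nonneg_right (min_le_left _ _) (by linarith)).trans h1,
      h2.trans (mul_le_mul_of_nonneg_right (le_max_left _ _) (by linarith))⟩
  · obtain ⟨h1, h2⟩ := hcompact z₁ ⟨hz₁0, le_rfl⟩
    obtain ⟨h3, h4⟩ := htail z hzz₁
    have := min_le_left m a; have := min_le_right m a
    have := le_max_left M b; have := le_max_right M b
    constructor <;> nlinarith

theorem le_rpow_neg_inv_iff {u x : ℝ} (hu : 0 < u) (hx : 0 < x) {n : ℕ} (hn : n ≠ 0) :
    u ≤ x ^ (-(1 / (n : ℝ))) ↔ x ≤ (u ^ n)⁻¹ := by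
  rw [Real.rpow_neg hx.le, ← Real.inv_rpow hx.le, one_div,
    Real.le_rpow_inv_iff_of_pos hu.le (inv_nonneg.2 hx.le) (by positivity), Real.rpow_natCast,
    le_inv_comm₀ (pow_pos hu n) hx]

theorem rpow_neg_inv_le_iff {u x : ℝ} (hu : 0 < u) (hx : 0 < x) {n : ℕ} (hn : n ≠ 0) :
    x ^ (-(1 / (n : ℝ))) ≤ u ↔ (u ^ n)⁻¹ ≤ x := by
  rw [Real.rpow_neg hx.le, ← Real.inv_rpow hx.le, one_div,
    Real.rpow_inv_le_iff_of_pos (inv_nonneg.2 hx.le) hu.le (by positivity), Real.rpow_natCast,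
    inv_le_comm₀ hx (pow_pos hu n)]

theorem HasDerivAt.inv_pow_of_eq_mul_comp {U φ : ℝ → ℝ} {z : ℝ} (n : ℕ)
    (hU : HasDerivAt U (U z * φ (U z)) z) (hz : U z ≠ 0) :
    HasDerivAt (fun z => (U z ^ n)⁻¹) (-(n * (φ (U z) / U z ^ n))) z := by
  refine ((hU.fun_pow n).fun_inv (pow_ne_zero n hz)).congr_deriv ?_
  rcases n with _ | n
  · simp
  · rw [Nat.add_sub_cancel]
    field_simp
    ring

theorem tendsto_deriv_inv_pow_of_deriv_eq_mul_comp {U g : ℝ → ℝ} {n : ℕ}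
    (hU : Differentiable ℝ U) (hUode : ∀ z, deriv U z = U z * g (U z))
    (hU_right : Tendsto U atTop (𝓝[>] 0)) (hg : ContDiff ℝ (n + 1) g)
    (hg₀ : ∀ j ≤ n, iteratedDeriv j g 0 = 0) :
    Tendsto (deriv fun z => (U z ^ (n + 1))⁻¹) atTop
      (𝓝 (-((n + 1 : ℕ) * (iteratedDeriv (n + 1) g 0 / (n + 1).factorial)))) := by
  have hg_ratio := (tendsto_div_pow_of_iteratedDeriv_eq_zero hg hg₀).comp
    (hU_right.mono_right (nhdsWithin_mono _ fun u hu => ne_of_gt hu))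
  simp only [sub_zero] at hg_ratio
  refine (hg_ratio.const_mul _).neg.congr' ?_
  filter_upwards [hU_right.eventually self_mem_nhdsWithin] with z hz
  exact ((hUode z ▸ (hU z).hasDerivAt).inv_pow_of_eq_mul_comp (n + 1) (ne_of_gt hz)).deriv.symm

theorem exists_rpow_bounds_of_inv_pow_bounds {U : ℝ → ℝ} {n : ℕ} (hn : n ≠ 0)
    (hUpos : ∀ z, 0 < U z) {A B : ℝ} (hA : 0 < A) (hAB : A ≤ B)
    (hbounds : ∀ z, 0 ≤ z → A * (1 + z) ≤ (U z ^ n)⁻¹ ∧ (U z ^ n)⁻¹ ≤ B * (1 + z)) :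
    ∃ C₁ C₂ : ℝ, 0 < C₁ ∧ C₁ ≤ C₂ ∧ ∀ z : ℝ, 0 ≤ z →
      C₁ * (1 + z) ^ (-(1 / (n : ℝ))) ≤ U z ∧ U z ≤ C₂ * (1 + z) ^ (-(1 / (n : ℝ))) := by
  have hB : 0 < B := hA.trans_le hAB
  refine ⟨B ^ (-(1 / (n : ℝ))), A ^ (-(1 / (n : ℝ))), Real.rpow_pos_of_pos hB _,
    Real.rpow_le_rpow_of_nonpos hA hAB (neg_nonpos.2 (by positivity)), fun z hz => ?_⟩
  have h1z : 0 < 1 + z := by linarith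
  rw [← Real.mul_rpow hB.le h1z.le, ← Real.mul_rpow hA.le h1z.le,
    rpow_neg_inv_le_iff (hUpos z) (by positivity) hn,
    le_rpow_neg_inv_iff (hUpos z) (by positivity) hn]
  exact (hbounds z hz).symm

theorem stmt_6_general
    (k : ℕ)
    (f : ℝ → ℝ) (hf : ContDiff ℝ (k + 1 : ℕ) f)
    (um : ℝ)
    (s : ℝ)
    (g : ℝ → ℝ) (hg : ∀ u, g u = f u - f 0 - s * u)
    (U : ℝ → ℝ) (hU : ContDiff ℝ 1 U)
    (hUrange : ∀ z, U z ∈ Set.Ioo 0 um)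
    (hUode : ∀ z, deriv U z = U z * g (U z))
    (hUtop : Tendsto U atTop (nhds 0))
    (hdeg : ∀ j : ℕ, 1 ≤ j → j ≤ k → iteratedDeriv j g 0 = 0)
    (hdeg' : iteratedDeriv (k + 1) g 0 ≠ 0) :
    ∃ C₁ C₂ : ℝ, 0 < C₁ ∧ C₁ ≤ C₂ ∧
      ∀ z : ℝ, 0 ≤ z →
        C₁ * (1 + z) ^ (-(1 / (1 + (k : ℝ)))) ≤ U z ∧
        U z ≤ C₂ * (1 + z) ^ (-(1 / (1 + (k : ℝ)))) := by
  have hUpos z : 0 < U z := (hUrange z).1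
  have hgC : ContDiff ℝ (k + 1) g := by
    rw [show g = fun u => f u - f 0 - s * u from funext hg]
    exact_mod_cast (hf.sub contDiff_const).sub (contDiff_const.mul contDiff_id)
  have hg₀ : ∀ j ≤ k, iteratedDeriv j g 0 = 0 := by
    rintro (_ | j) hj
    · simp [hg]
    · exact hdeg _ j.succ_pos hj
  have hU_right : Tendsto U atTop (𝓝[>] 0) :=
    tendsto_nhdsWithin_iff.2 ⟨hUtop, Eventually.of_forall hUpos⟩
  set V := fun z => (U z ^ (k + 1))⁻¹
  have hUdiff : Differentiable ℝ U := hU.differentiable one_ne_zero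
  have hVdiff : Differentiable ℝ V := fun z =>
    ((hUdiff z).pow _).inv (pow_ne_zero _ (hUpos z).ne')
  have hV' := tendsto_deriv_inv_pow_of_deriv_eq_mul_comp hUdiff hUode hU_right hgC hg₀
  set l := -((k + 1 : ℕ) * (iteratedDeriv (k + 1) g 0 / (k + 1).factorial))
  have hV_top : Tendsto V atTop atTop := tendsto_inv_nhdsGT_zero.comp <|
    tendsto_nhdsWithin_iff.2 ⟨by simpa using hUtop.pow (k + 1),
      Eventually.of_forall fun z => pow_pos (hUpos z) _⟩
  have hl : 0 < l := (nonneg_of_tendsto_deriv_of_tendsto_atTop hVdiff hV_top hV').lt_of_ne' <| by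
    simp [l, hdeg', Nat.factorial_ne_zero, Nat.cast_add_one_ne_zero]
  obtain ⟨A, B, hA, hAB, hVbounds⟩ := exists_linear_bounds_of_eventually_deriv_mem_Icc hVdiff
    (fun z => inv_pos.2 (pow_pos (hUpos z) _)) (half_pos hl)
    (hV'.eventually (Icc_mem_nhds (half_lt_self hl) (lt_two_mul_self hl)))
  have hk : 1 + (k : ℝ) = (k + 1 : ℕ) := by push_cast; ring
  rw [hk]
  exact exists_rpow_bounds_of_inv_pow_bounds k.succ_ne_zero hUpos hA hAB hVbounds

/-- For a shock profile `U` with the degenerate condition at the right state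
(`g⁽ʲ⁾(0) = 0` for `1 ≤ j ≤ k₊` and `g⁽ᵏ⁺⁺¹⁾(0) ≠ 0`), one has the algebraic decay
`C₁·(1+z)^{-1/(1+k₊)} ≤ U(z) ≤ C₂·(1+z)^{-1/(1+k₊)}` for all `z ≥ 0`. -/
theorem stmt_6
    (k : ℕ) (hk : 1 ≤ k)
    (f : ℝ → ℝ) (hf : ContDiff ℝ (k + 1 : ℕ) f)
    (um : ℝ) (hum : 0 < um)
    (s : ℝ) (hs : s = (f um - f 0) / um)
    (g : ℝ → ℝ) (hg : ∀ u, g u = f u - f 0 - s * u)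
    (U : ℝ → ℝ) (hU : ContDiff ℝ 1 U)
    (hUrange : ∀ z, U z ∈ Set.Ioo 0 um)
    (hUode : ∀ z, deriv U z = U z * g (U z))
    (hUbot : Tendsto U atBot (nhds um))
    (hUtop : Tendsto U atTop (nhds 0))
    (hdeg : ∀ j : ℕ, 1 ≤ j → j ≤ k → iteratedDeriv j g 0 = 0)
    (hdeg' : iteratedDeriv (k + 1) g 0 ≠ 0) :
    ∃ C₁ C₂ : ℝ, 0 < C₁ ∧ C₁ ≤ C₂ ∧
      ∀ z : ℝ, 0 ≤ z →
        C₁ * (1 + z) ^ (-(1 / (1 + (k : ℝ)))) ≤ U z ∧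
        U z ≤ C₂ * (1 + z) ^ (-(1 / (1 + (k : ℝ)))) :=
  stmt_6_general k f hf um s g hg U hU hUrange hUode hUtop hdeg hdeg'
end

section
/- Let k₋ ≥ 1 be an integer, let f be (k₋+1)-times continuously differentiable, and let U be a shock profile. Assume the degenerate condition at the left state: g^{(j)}(u_-) = 0 for 1 ≤ j ≤ k₋ and g^{(k₋+1)}(u_-) ≠ 0 (in particular f'(u_-) = s). Then there exist constants 0 < C₁ ≤ C₂ such that C₁·(1+|z|)^{-1/k₋} ≤ u_- - U(z) ≤ C₂·(1+|z|)^{-1/k₋} for all z ≤ 0. -/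
/-!
Near `u₋`, Taylor's formula with the vanishing derivatives gives
`g(u) = a (u - u₋)^(k+1) / (k+1)! + o((u - u₋)^(k+1))` with `a = g^(k+1)(u₋) ≠ 0`, so
`v = u₋ - U` solves an autonomous equation `v' = F(v)` with `F(x) = ν x^(k+1) (1 + o(1))`,
`ν ≠ 0`. Since `v > 0` and `v → 0` at `-∞`, `v` cannot be decreasing there, which forces
`ν > 0`. Then `w = v^(-k)` has derivative pinched between two negative constants near `-∞`,
so `w` grows linearly and `v ≍ |z|^(-1/k)`. On the remaining compact interval up to `0`, both
`v` and `(1 + |z|)^(-1/k)` are continuous and positive.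
-/

open Filter Asymptotics Set Topology

theorem taylor_isLittleO_of_iteratedDeriv_eq_zero {g : ℝ → ℝ} {x₀ : ℝ} {n : ℕ}
    (hg : ContDiff ℝ (n + 1 : ℕ) g)
    (hvanish : ∀ j, 1 ≤ j → j ≤ n → iteratedDeriv j g x₀ = 0) :
    (fun x ↦ g x - g x₀ - iteratedDeriv (n + 1) g x₀ / (n + 1).factorial * (x - x₀) ^ (n + 1))
      =o[𝓝 x₀] fun x ↦ (x - x₀) ^ (n + 1) := by
  have htaylor : ∀ x, taylorWithinEval g (n + 1) univ x₀ x =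
      g x₀ + iteratedDeriv (n + 1) g x₀ / (n + 1).factorial * (x - x₀) ^ (n + 1) := by
    intro x
    rw [taylor_within_apply, Finset.sum_range_succ, Finset.sum_range_succ',
      Finset.sum_eq_zero fun j hj ↦ ?_]
    · simp only [iteratedDerivWithin_univ, iteratedDeriv_zero, smul_eq_mul, Nat.factorial_zero,
        Nat.cast_one, inv_one, pow_zero, one_mul, mul_one, zero_add]
      ring
    · rw [Finset.mem_range] at hj
      simp [iteratedDerivWithin_univ, hvanish (j + 1) (by omega) (by omega)]
  exact (taylor_isLittleO_univ hg).congr_left fun x ↦ by rw [htaylor]; ring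

theorem Asymptotics.IsLittleO.mul_sub_const_mul_pow {G ρ : ℝ → ℝ} {c : ℝ} {n : ℕ}
    (hG : (fun x ↦ G x - c * x ^ n) =o[𝓝 0] fun x ↦ x ^ n) (hρ : ContinuousAt ρ 0) :
    (fun x ↦ ρ x * G x - ρ 0 * c * x ^ n) =o[𝓝 0] fun x ↦ x ^ n := by
  have hfirst : (fun x ↦ ρ x * (G x - c * x ^ n)) =o[𝓝 0] fun x ↦ x ^ n := by
    simpa using (hρ.tendsto.isBigO_one ℝ).mul_isLittleO hG
  have hsecond : (fun x ↦ (ρ x - ρ 0) * (c * x ^ n)) =o[𝓝 0] fun x ↦ x ^ n := by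
    have hρ0 : (fun x ↦ ρ x - ρ 0) =o[𝓝 0] fun _ ↦ (1 : ℝ) :=
      (isLittleO_one_iff ℝ).2 (tendsto_sub_nhds_zero_iff.2 hρ.tendsto)
    simpa using hρ0.mul_isBigO (isBigO_const_mul_self c (fun x : ℝ ↦ x ^ n) _)
  exact (hfirst.add hsecond).congr_left fun x ↦ by ring

theorem eventually_abs_sub_le_of_isLittleO {F : ℝ → ℝ} {ν : ℝ} {n : ℕ} (hν : ν ≠ 0)
    (hF : (fun x ↦ F x - ν * x ^ n) =o[𝓝 0] fun x ↦ x ^ n) :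
    ∀ᶠ x in 𝓝[>] 0, |F x - ν * x ^ n| ≤ |ν| / 2 * x ^ n := by
  filter_upwards [nhdsWithin_le_nhds (hF.bound (by positivity : 0 < |ν| / 2)),
    self_mem_nhdsWithin] with x hx hxpos
  simpa [abs_of_pos (mem_Ioi.1 hxpos)] using hx

theorem pos_of_hasDerivAt_of_tendsto_atBot {v F : ℝ → ℝ} {ν : ℝ} {n : ℕ}
    (hv : ∀ z, HasDerivAt v (F (v z)) z) (hpos : ∀ z, 0 < v z)
    (hlim : Tendsto v atBot (𝓝 0))
    (hF : (fun x ↦ F x - ν * x ^ n) =o[𝓝 0] fun x ↦ x ^ n) (hν : ν ≠ 0) : 0 < ν := by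
  by_contra hnonpos
  have hneg : ν < 0 := lt_of_le_of_ne (not_lt.1 hnonpos) hν
  have hFneg : ∀ᶠ x in 𝓝[>] 0, F x < 0 := by
    filter_upwards [eventually_abs_sub_le_of_isLittleO hν hF, self_mem_nhdsWithin]
      with x hx hxpos
    have hxn : 0 < x ^ n := pow_pos (mem_Ioi.1 hxpos) n
    rw [abs_of_neg hneg] at hx
    nlinarith [le_abs_self (F x - ν * x ^ n)]
  have hlim' : Tendsto v atBot (𝓝[>] 0) :=
    tendsto_nhdsWithin_iff.2 ⟨hlim, Eventually.of_forall hpos⟩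
  obtain ⟨Z, hZ⟩ := eventually_atBot.1 (hlim'.eventually hFneg)
  have hanti : StrictAntiOn v (Iic Z) :=
    strictAntiOn_of_deriv_neg (convex_Iic Z)
      (fun z _ ↦ (hv z).continuousAt.continuousWithinAt)
      (fun z hz ↦ by
        rw [interior_Iic] at hz
        exact (hv z).deriv ▸ hZ z (le_of_lt hz))
  have hvZ : v Z ≤ 0 :=
    ge_of_tendsto hlim <| eventually_atBot.2
      ⟨Z, fun y hy ↦ hanti.antitoneOn hy (mem_Iic.2 le_rfl) hy⟩
  exact (hpos Z).not_ge hvZ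

theorem eventually_linear_bounds_of_Iic {w : ℝ → ℝ} {A B Z : ℝ} (hA : 0 < A) (hwZ : 0 ≤ w Z)
    (hw : ∀ z ≤ Z, w Z + A * (Z - z) ≤ w z ∧ w z ≤ w Z + B * (Z - z)) :
    ∃ ε M, 0 < ε ∧ ∀ᶠ z in atBot, ε * (1 + |z|) ≤ w z ∧ w z ≤ M * (1 + |z|) := by
  refine ⟨A / 2, w Z + |B| * (|Z| + 1), by positivity, ?_⟩
  filter_upwards [eventually_le_atBot (min (min Z 0) (2 * Z - 1))] with z hz
  have hzZ : z ≤ Z := hz.trans ((min_le_left _ _).trans (min_le_left _ _))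
  have hz0 : z ≤ 0 := hz.trans ((min_le_left _ _).trans (min_le_right _ _))
  have hz1 : z ≤ 2 * Z - 1 := hz.trans (min_le_right _ _)
  obtain ⟨hlow, hup⟩ := hw z hzZ
  rw [abs_of_nonpos hz0]
  constructor
  · nlinarith
  · have hB : B * (Z - z) ≤ |B| * (Z - z) :=
      mul_le_mul_of_nonneg_right (le_abs_self B) (by linarith)
    nlinarith [mul_nonneg hwZ (neg_nonneg.2 hz0), le_abs_self Z,
      mul_nonneg (abs_nonneg B) (mul_nonneg (abs_nonneg Z) (neg_nonneg.2 hz0)),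
      mul_nonneg (abs_nonneg B) (sub_nonneg.2 (le_abs_self Z))]

theorem eventually_rpow_bounds_of_deriv_bounds {v v' : ℝ → ℝ} {q c₁ c₂ Z : ℝ} (hq : 0 < q)
    (hc₁ : 0 < c₁) (hv : ∀ z ≤ Z, HasDerivAt v (v' z) z) (hpos : ∀ z ≤ Z, 0 < v z)
    (hv' : ∀ z ≤ Z, c₁ * v z ^ (q + 1) ≤ v' z ∧ v' z ≤ c₂ * v z ^ (q + 1)) :
    ∃ C₁ C₂, 0 < C₁ ∧ ∀ᶠ z in atBot,
      C₁ * (1 + |z|) ^ (-(1 / q)) ≤ v z ∧ v z ≤ C₂ * (1 + |z|) ^ (-(1 / q)) := by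
  set w : ℝ → ℝ := fun z ↦ v z ^ (-q)
  have hw : ∀ z ≤ Z, HasDerivAt w (-q * (v z ^ (-q - 1) * v' z)) z := fun z hz ↦ by
    convert (hv z hz).rpow_const (p := -q) (Or.inl (hpos z hz).ne') using 1
    ring
  have hw' : ∀ z ≤ Z, -(q * c₂) ≤ deriv w z ∧ deriv w z ≤ -(q * c₁) := fun z hz ↦ by
    have hinv : v z ^ (-q - 1) * v z ^ (q + 1) = 1 := by
      rw [← Real.rpow_add (hpos z hz)]; simp
    have hpow : 0 < v z ^ (-q - 1) := Real.rpow_pos_of_pos (hpos z hz) _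
    obtain ⟨hlow, hup⟩ := hv' z hz
    have hlow' : c₁ ≤ v z ^ (-q - 1) * v' z := by
      calc c₁ = v z ^ (-q - 1) * (c₁ * v z ^ (q + 1)) := by rw [mul_left_comm, hinv, mul_one]
        _ ≤ _ := mul_le_mul_of_nonneg_left hlow hpow.le
    have hup' : v z ^ (-q - 1) * v' z ≤ c₂ := by
      calc _ ≤ v z ^ (-q - 1) * (c₂ * v z ^ (q + 1)) := mul_le_mul_of_nonneg_left hup hpow.le
        _ = c₂ := by rw [mul_left_comm, hinv, mul_one]
    rw [(hw z hz).deriv]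
    constructor <;> nlinarith
  have hcont : ContinuousOn w (Iic Z) := fun z hz ↦ (hw z hz).continuousAt.continuousWithinAt
  have hdiff : DifferentiableOn ℝ w (interior (Iic Z)) := fun z hz ↦
    (hw z (mem_Iic.1 (interior_subset hz))).differentiableAt.differentiableWithinAt
  have hlin : ∀ z ≤ Z, w Z + q * c₁ * (Z - z) ≤ w z ∧ w z ≤ w Z + q * c₂ * (Z - z) := by
    intro z hz
    have hup := (convex_Iic Z).image_sub_le_mul_sub_of_deriv_le hcont hdiff
      (fun x hx ↦ (hw' x (mem_Iic.1 (interior_subset hx))).2) z hz Z (mem_Iic.2 le_rfl) hz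
    have hlow := (convex_Iic Z).mul_sub_le_image_sub_of_le_deriv hcont hdiff
      (fun x hx ↦ (hw' x (mem_Iic.1 (interior_subset hx))).1) z hz Z (mem_Iic.2 le_rfl) hz
    constructor <;> linarith
  obtain ⟨ε, M, hε, hbot⟩ := eventually_linear_bounds_of_Iic (w := w) (mul_pos hq hc₁)
    (Real.rpow_pos_of_pos (hpos Z le_rfl) _).le hlin
  have hM : 0 < M := by
    obtain ⟨z, hlow, hup⟩ := hbot.exists
    nlinarith [abs_nonneg z]
  refine ⟨M ^ (-(1 / q)), ε ^ (-(1 / q)), Real.rpow_pos_of_pos hM _, ?_⟩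
  filter_upwards [hbot, eventually_le_atBot Z] with z ⟨hlow, hup⟩ hzZ
  have hp : -(1 / q) ≤ 0 := by simp [hq.le]
  have hwz : 0 < w z := Real.rpow_pos_of_pos (hpos z hzZ) _
  have hvw : w z ^ (-(1 / q)) = v z := by
    rw [← Real.rpow_mul (hpos z hzZ).le, neg_mul_neg, mul_one_div_cancel hq.ne', Real.rpow_one]
  have h1z : 0 ≤ 1 + |z| := by positivity
  rw [← hvw, ← Real.mul_rpow hM.le h1z, ← Real.mul_rpow hε.le h1z]
  exact ⟨Real.rpow_le_rpow_of_nonpos hwz hup hp,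
    Real.rpow_le_rpow_of_nonpos (by positivity) hlow hp⟩

theorem exists_bounds_Iic_of_eventually_bounds {v h : ℝ → ℝ} {a c₁ c₂ : ℝ} (hc₁ : 0 < c₁)
    (hv : ContinuousOn v (Iic a)) (hh : ContinuousOn h (Iic a))
    (hvpos : ∀ z ≤ a, 0 < v z) (hhpos : ∀ z ≤ a, 0 < h z)
    (hbot : ∀ᶠ z in atBot, c₁ * h z ≤ v z ∧ v z ≤ c₂ * h z) :
    ∃ C₁ C₂, 0 < C₁ ∧ C₁ ≤ C₂ ∧ ∀ z ≤ a, C₁ * h z ≤ v z ∧ v z ≤ C₂ * h z := by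
  obtain ⟨Z, hZ⟩ := eventually_atBot.1 hbot
  set Z' := min Z a
  have hsub : Icc Z' a ⊆ Iic a := Icc_subset_Iic_self
  have hne : (Icc Z' a).Nonempty := nonempty_Icc.2 (min_le_right _ _)
  have hr : ContinuousOn (fun z ↦ v z / h z) (Icc Z' a) :=
    (hv.mono hsub).div (hh.mono hsub) fun z hz ↦ (hhpos z hz.2).ne'
  obtain ⟨zmin, hzmin, hmin⟩ := isCompact_Icc.exists_isMinOn hne hr
  obtain ⟨zmax, hzmax, hmax⟩ := isCompact_Icc.exists_isMaxOn hne hr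
  refine ⟨min c₁ (v zmin / h zmin), max c₂ (v zmax / h zmax),
    lt_min hc₁ (div_pos (hvpos _ hzmin.2) (hhpos _ hzmin.2)),
    (min_le_right _ _).trans ((hmin hzmax).trans (le_max_right _ _)), fun z hz ↦ ?_⟩
  have hhz := hhpos z hz
  rcases le_total z Z' with hzZ | hzZ
  · obtain ⟨hlow, hup⟩ := hZ z (hzZ.trans (min_le_left _ _))
    exact ⟨(mul_le_mul_of_nonneg_right (min_le_left _ _) hhz.le).trans hlow,
      hup.trans (mul_le_mul_of_nonneg_right (le_max_left _ _) hhz.le)⟩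
  · have hzI : z ∈ Icc Z' a := ⟨hzZ, hz⟩
    constructor
    · rw [← le_div_iff₀ hhz]
      exact (min_le_right _ _).trans (hmin hzI)
    · rw [← div_le_iff₀ hhz]
      exact (hmax hzI).trans (le_max_right _ _)

theorem exists_rpow_bounds_of_hasDerivAt {v F : ℝ → ℝ} {ν : ℝ} {k : ℕ} (hk : k ≠ 0)
    (hv : ∀ z, HasDerivAt v (F (v z)) z) (hpos : ∀ z, 0 < v z)
    (hlim : Tendsto v atBot (𝓝 0))
    (hF : (fun x ↦ F x - ν * x ^ (k + 1)) =o[𝓝 0] fun x ↦ x ^ (k + 1)) (hν : ν ≠ 0) :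
    ∃ C₁ C₂, 0 < C₁ ∧ C₁ ≤ C₂ ∧ ∀ z ≤ 0,
      C₁ * (1 + |z|) ^ (-(1 / (k : ℝ))) ≤ v z ∧ v z ≤ C₂ * (1 + |z|) ^ (-(1 / (k : ℝ))) := by
  have hνpos := pos_of_hasDerivAt_of_tendsto_atBot hv hpos hlim hF hν
  have hlim' : Tendsto v atBot (𝓝[>] 0) :=
    tendsto_nhdsWithin_iff.2 ⟨hlim, Eventually.of_forall hpos⟩
  obtain ⟨Z, hZ⟩ :=
    eventually_atBot.1 (hlim'.eventually (eventually_abs_sub_le_of_isLittleO hν hF))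
  have hrpow : ∀ z, v z ^ ((k : ℝ) + 1) = v z ^ (k + 1) := fun z ↦ by
    exact_mod_cast Real.rpow_natCast (v z) (k + 1)
  obtain ⟨c₁, c₂, hc₁, hbot⟩ := eventually_rpow_bounds_of_deriv_bounds (v' := fun z ↦ F (v z))
    (Nat.cast_pos.2 (Nat.pos_of_ne_zero hk)) (half_pos hνpos) (fun z _ ↦ hv z) (fun z _ ↦ hpos z)
    (c₂ := 3 * ν / 2) fun z hz ↦ by
      have hFz := abs_le.1 (hZ z hz)
      rw [abs_of_pos hνpos] at hFz
      rw [hrpow]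
      constructor <;> linarith [hFz.1, hFz.2]
  exact exists_bounds_Iic_of_eventually_bounds hc₁
    (fun z _ ↦ (hv z).continuousAt.continuousWithinAt)
    ((continuous_const.add continuous_abs).continuousOn.rpow_const
      fun z _ ↦ Or.inl (by positivity : (0 : ℝ) < 1 + |z|).ne')
    (fun z _ ↦ hpos z) (fun z _ ↦ Real.rpow_pos_of_pos (by positivity) _) hbot

theorem stmt_7_general
    (k : ℕ) (hk : 1 ≤ k)
    (f : ℝ → ℝ) (hf : ContDiff ℝ (k + 1 : ℕ) f)
    (um : ℝ) (hum : 0 < um)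
    (s : ℝ) (hs : s = (f um - f 0) / um)
    (g : ℝ → ℝ) (hg : ∀ u, g u = f u - f 0 - s * u)
    (U : ℝ → ℝ) (hU : ContDiff ℝ 1 U)
    (hUrange : ∀ z, U z ∈ Set.Ioo 0 um)
    (hUode : ∀ z, deriv U z = U z * g (U z))
    (hUbot : Tendsto U atBot (nhds um))
    (hdeg : ∀ j : ℕ, 1 ≤ j → j ≤ k → iteratedDeriv j g um = 0)
    (hdeg' : iteratedDeriv (k + 1) g um ≠ 0) :
    ∃ C₁ C₂ : ℝ, 0 < C₁ ∧ C₁ ≤ C₂ ∧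
      ∀ z : ℝ, z ≤ 0 →
        C₁ * (1 + |z|) ^ (-(1 / (k : ℝ))) ≤ um - U z ∧
        um - U z ≤ C₂ * (1 + |z|) ^ (-(1 / (k : ℝ))) := by
  have hg_smooth : ContDiff ℝ (k + 1 : ℕ) g := by
    rw [show g = _ from funext hg]
    fun_prop
  have hg_um : g um = 0 := by
    rw [hg, hs]
    field_simp
    ring
  set G : ℝ → ℝ := fun x ↦ g (um - x)
  have hG_smooth : ContDiff ℝ (k + 1 : ℕ) G := hg_smooth.comp (by fun_prop)
  have hG : ∀ j, iteratedDeriv j G 0 = (-1) ^ j * iteratedDeriv j g um := fun j ↦ by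
    simp [G, iteratedDeriv_comp_const_sub]
  set c := iteratedDeriv (k + 1) G 0 / (k + 1).factorial
  have hTaylor : (fun x ↦ G x - c * x ^ (k + 1)) =o[𝓝 0] fun x ↦ x ^ (k + 1) := by
    simpa [G, hg_um, c] using taylor_isLittleO_of_iteratedDeriv_eq_zero (x₀ := 0) hG_smooth
      fun j h₁ h₂ ↦ by rw [hG, hdeg j h₁ h₂, mul_zero]
  have hc : c ≠ 0 := by
    simp [c, hG, hdeg', Nat.factorial_ne_zero]
  exact exists_rpow_bounds_of_hasDerivAt (v := fun z ↦ um - U z) (F := fun x ↦ (x - um) * G x)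
    (k := k) (by omega)
    (fun z ↦ ((hU.differentiable one_ne_zero z).hasDerivAt.const_sub um).congr_deriv
      (by simp [G, hUode]))
    (fun z ↦ sub_pos.2 (hUrange z).2) (by simpa using hUbot.const_sub um)
    (hTaylor.mul_sub_const_mul_pow (by fun_prop)) (mul_ne_zero (by simpa using hum.ne') hc)

/-- For a shock profile `U` with the degenerate condition at the left state
(`g⁽ʲ⁾(u₋) = 0` for `1 ≤ j ≤ k₋` and `g⁽ᵏ⁻⁺¹⁾(u₋) ≠ 0`), one has the algebraic rate
`C₁·(1+|z|)^{-1/k₋} ≤ u₋ - U(z) ≤ C₂·(1+|z|)^{-1/k₋}` for all `z ≤ 0`. -/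
theorem stmt_7
    (k : ℕ) (hk : 1 ≤ k)
    (f : ℝ → ℝ) (hf : ContDiff ℝ (k + 1 : ℕ) f)
    (um : ℝ) (hum : 0 < um)
    (s : ℝ) (hs : s = (f um - f 0) / um)
    (g : ℝ → ℝ) (hg : ∀ u, g u = f u - f 0 - s * u)
    (U : ℝ → ℝ) (hU : ContDiff ℝ 1 U)
    (hUrange : ∀ z, U z ∈ Set.Ioo 0 um)
    (hUode : ∀ z, deriv U z = U z * g (U z))
    (hUbot : Tendsto U atBot (nhds um))
    (hUtop : Tendsto U atTop (nhds 0))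
    (hdeg : ∀ j : ℕ, 1 ≤ j → j ≤ k → iteratedDeriv j g um = 0)
    (hdeg' : iteratedDeriv (k + 1) g um ≠ 0) :
    ∃ C₁ C₂ : ℝ, 0 < C₁ ∧ C₁ ≤ C₂ ∧
      ∀ z : ℝ, z ≤ 0 →
        C₁ * (1 + |z|) ^ (-(1 / (k : ℝ))) ≤ um - U z ∧
        um - U z ≤ C₂ * (1 + |z|) ^ (-(1 / (k : ℝ))) :=
  stmt_7_general k hk f hf um hum s hs g hg U hU hUrange hUode hUbot hdeg hdeg'
end

section
/- Let k₊ ≥ 1 be an integer, let f be (k₊+1)-times continuously differentiable, and let U be a shock profile. Assume g^{(j)}(0) = 0 for 1 ≤ j ≤ k₊. Then there exists a constant C > 0 such that |U'(z)| ≤ C·U(z)^{2+k₊} for all z ∈ ℝ. -/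
open Filter Set

/-!
Since `g` is `C^{k₊+1}` and vanishes at `0` to order `k₊`, its Taylor polynomial of degree `k₊`
at `0` is zero, so Taylor's theorem gives `|g(u)| ≤ C u^{k₊+1}` on `[0, u₋]`. The profile equation
`U' = U g(U)` and `0 < U < u₋` then yield `|U'| ≤ C U^{k₊+2}`.
-/

theorem taylorWithinEval_eq_zero_of_iteratedDeriv_eq_zero {E : Type*} [NormedAddCommGroup E]
    [NormedSpace ℝ E] {f : ℝ → E} {n : ℕ} {s : Set ℝ} {x₀ : ℝ} (hs : UniqueDiffOn ℝ s)
    (hx₀ : x₀ ∈ s) (hf : ContDiffAt ℝ n f x₀) (hvanish : ∀ j ≤ n, iteratedDeriv j f x₀ = 0)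
    (x : ℝ) : taylorWithinEval f n s x₀ x = 0 := by
  rw [taylor_within_apply]
  refine Finset.sum_eq_zero fun j hj => ?_
  have hjn : j ≤ n := Nat.lt_succ_iff.mp (Finset.mem_range.mp hj)
  rw [iteratedDerivWithin_eq_iteratedDeriv hs (hf.of_le (by exact_mod_cast hjn)) hx₀,
    hvanish j hjn, smul_zero]

theorem exists_norm_le_mul_pow_of_iteratedDeriv_eq_zero {E : Type*} [NormedAddCommGroup E]
    [NormedSpace ℝ E] {f : ℝ → E} {n : ℕ} (hf : ContDiff ℝ (n + 1 : ℕ) f) {a b : ℝ}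
    (hab : a ≤ b) (hvanish : ∀ j ≤ n, iteratedDeriv j f a = 0) :
    ∃ C > 0, ∀ x ∈ Icc a b, ‖f x‖ ≤ C * (x - a) ^ (n + 1) := by
  obtain ⟨C, hC⟩ := exists_taylor_mean_remainder_bound hab hf.contDiffOn
  refine ⟨max C 1, by positivity, fun x hx => ?_⟩
  rcases hab.eq_or_lt with rfl | hab'
  · obtain rfl : x = a := le_antisymm hx.2 hx.1
    simpa using hvanish 0 (Nat.zero_le n)
  have hpoly := taylorWithinEval_eq_zero_of_iteratedDeriv_eq_zero (uniqueDiffOn_Icc hab')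
    (left_mem_Icc.mpr hab) (hf.contDiffAt.of_le (by exact_mod_cast Nat.le_succ n)) hvanish x
  calc ‖f x‖ ≤ C * (x - a) ^ (n + 1) := by simpa [hpoly] using hC x hx
    _ ≤ max C 1 * (x - a) ^ (n + 1) :=
      mul_le_mul_of_nonneg_right (le_max_left _ _) (pow_nonneg (sub_nonneg.mpr hx.1) _)

theorem stmt_10_general
    (k : ℕ)
    (f : ℝ → ℝ) (hf : ContDiff ℝ (k + 1 : ℕ) f)
    (um : ℝ) (hum : 0 < um)
    (s : ℝ)
    (g : ℝ → ℝ) (hg : ∀ u, g u = f u - f 0 - s * u)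
    (U : ℝ → ℝ)
    (hUrange : ∀ z, U z ∈ Set.Ioo 0 um)
    (hUode : ∀ z, deriv U z = U z * g (U z))
    (hdeg : ∀ j : ℕ, 1 ≤ j → j ≤ k → iteratedDeriv j g 0 = 0) :
    ∃ C : ℝ, 0 < C ∧ ∀ z : ℝ, |deriv U z| ≤ C * (U z) ^ (2 + k) := by
  have hgC : ContDiff ℝ (k + 1 : ℕ) g := by
    rw [show g = fun u => f u - f 0 - s * u from funext hg]
    fun_prop
  have hvanish : ∀ j ≤ k, iteratedDeriv j g 0 = 0 := by
    rintro (_ | j) hj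
    · simp [hg]
    · exact hdeg (j + 1) j.succ_pos hj
  obtain ⟨C, hC, hgbound⟩ := exists_norm_le_mul_pow_of_iteratedDeriv_eq_zero hgC hum.le hvanish
  refine ⟨C, hC, fun z => ?_⟩
  obtain ⟨hU0, hUum⟩ := hUrange z
  have hgU : |g (U z)| ≤ C * U z ^ (k + 1) := by
    simpa using hgbound (U z) ⟨hU0.le, hUum.le⟩
  calc |deriv U z| = U z * |g (U z)| := by rw [hUode z, abs_mul, abs_of_pos hU0]
    _ ≤ U z * (C * U z ^ (k + 1)) := mul_le_mul_of_nonneg_left hgU hU0.le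
    _ = C * U z ^ (2 + k) := by ring

/-- For a shock profile `U` with the degenerate condition `g⁽ʲ⁾(0) = 0`
for `1 ≤ j ≤ k₊`, one has `|U'(z)| ≤ C·U(z)^{2+k₊}` for all `z`. -/
theorem stmt_10
    (k : ℕ) (hk : 1 ≤ k)
    (f : ℝ → ℝ) (hf : ContDiff ℝ (k + 1 : ℕ) f)
    (um : ℝ) (hum : 0 < um)
    (s : ℝ) (hs : s = (f um - f 0) / um)
    (g : ℝ → ℝ) (hg : ∀ u, g u = f u - f 0 - s * u)
    (U : ℝ → ℝ) (hU : ContDiff ℝ 1 U)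
    (hUrange : ∀ z, U z ∈ Set.Ioo 0 um)
    (hUode : ∀ z, deriv U z = U z * g (U z))
    (hUbot : Tendsto U atBot (nhds um))
    (hUtop : Tendsto U atTop (nhds 0))
    (hdeg : ∀ j : ℕ, 1 ≤ j → j ≤ k → iteratedDeriv j g 0 = 0) :
    ∃ C : ℝ, 0 < C ∧ ∀ z : ℝ, |deriv U z| ≤ C * (U z) ^ (2 + k) :=
  stmt_10_general k f hf um hum s g hg U hUrange hUode hdeg
end

section
/- Let k₋ ≥ 1 be an integer, let f be (k₋+1)-times continuously differentiable, and let U be a shock profile. Assume g^{(j)}(u_-) = 0 for 1 ≤ j ≤ k₋. Then there exists a constant C > 0 such that |U'(z)| ≤ C·(u_- - U(z))^{1+k₋} for all z ∈ ℝ. -/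
/-! Since `g(u₋) = 0` and `g⁽ʲ⁾(u₋) = 0` for `j ≤ k₋`, Taylor's theorem gives
`|g(u)| ≤ C (u₋ - u)^{k₋+1}` on `[0, u₋]`; the profile equation `U' = U g(U)` with `0 < U < u₋`
transfers this bound to `U'`. -/

open Filter Set

section TaylorBound

variable {n : ℕ} {g : ℝ → ℝ} {a b : ℝ}

lemma taylorWithinEval_eq_zero_of_iteratedDeriv_eq_zero_s11 (hg : ContDiff ℝ n g) (hab : a < b)
    (hzero : ∀ j ≤ n, iteratedDeriv j g a = 0) (x : ℝ) :
    taylorWithinEval g n (Icc a b) a x = 0 := by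
  rw [taylor_within_apply]
  refine Finset.sum_eq_zero fun j hj => ?_
  have hjn : j ≤ n := Nat.lt_succ_iff.mp (Finset.mem_range.mp hj)
  rw [iteratedDerivWithin_eq_iteratedDeriv (uniqueDiffOn_Icc hab)
    (hg.contDiffAt.of_le (by exact_mod_cast hjn)) (left_mem_Icc.mpr hab.le), hzero j hjn,
    smul_zero]

lemma exists_abs_le_mul_pow_sub_left_of_iteratedDeriv_eq_zero (hg : ContDiff ℝ (n + 1) g)
    (hab : a < b) (hzero : ∀ j ≤ n, iteratedDeriv j g a = 0) :
    ∃ C, 0 < C ∧ ∀ x ∈ Icc a b, |g x| ≤ C * (x - a) ^ (n + 1) := by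
  obtain ⟨C, hC⟩ := exists_taylor_mean_remainder_bound hab.le hg.contDiffOn
  refine ⟨max C 1, by positivity, fun x hx => ?_⟩
  have hremainder := hC x hx
  rw [taylorWithinEval_eq_zero_of_iteratedDeriv_eq_zero_s11 (hg.of_le (by norm_cast; omega)) hab
    hzero, sub_zero, Real.norm_eq_abs] at hremainder
  exact hremainder.trans
    (mul_le_mul_of_nonneg_right (le_max_left _ _) (pow_nonneg (sub_nonneg.mpr hx.1) _))

lemma exists_abs_le_mul_pow_sub_right_of_iteratedDeriv_eq_zero (hg : ContDiff ℝ (n + 1) g)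
    (hab : a < b) (hzero : ∀ j ≤ n, iteratedDeriv j g b = 0) :
    ∃ C, 0 < C ∧ ∀ x ∈ Icc a b, |g x| ≤ C * (b - x) ^ (n + 1) := by
  have hzero_neg : ∀ j ≤ n, iteratedDeriv j (fun x => g (-x)) (-b) = 0 := fun j hj => by
    rw [iteratedDeriv_comp_neg, neg_neg, hzero j hj, smul_zero]
  obtain ⟨C, hC_pos, hC⟩ := exists_abs_le_mul_pow_sub_left_of_iteratedDeriv_eq_zero
    (hg.comp contDiff_neg) (neg_lt_neg hab) hzero_neg
  refine ⟨C, hC_pos, fun x hx => ?_⟩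
  simpa [sub_eq_add_neg, add_comm] using hC (-x) ⟨neg_le_neg hx.2, neg_le_neg hx.1⟩

end TaylorBound

theorem stmt_11_general
    (k : ℕ)
    (f : ℝ → ℝ) (hf : ContDiff ℝ (k + 1 : ℕ) f)
    (um : ℝ) (hum : 0 < um)
    (s : ℝ) (hs : s = (f um - f 0) / um)
    (g : ℝ → ℝ) (hg : ∀ u, g u = f u - f 0 - s * u)
    (U : ℝ → ℝ)
    (hUrange : ∀ z, U z ∈ Set.Ioo 0 um)
    (hUode : ∀ z, deriv U z = U z * g (U z))
    (hdeg : ∀ j : ℕ, 1 ≤ j → j ≤ k → iteratedDeriv j g um = 0) :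
    ∃ C : ℝ, 0 < C ∧ ∀ z : ℝ, |deriv U z| ≤ C * (um - U z) ^ (1 + k) := by
  have hg_um : g um = 0 := by
    rw [hg, hs]; field_simp; ring
  have hg_smooth : ContDiff ℝ (k + 1 : ℕ) g := by
    rw [funext hg]
    exact (hf.sub contDiff_const).sub (contDiff_const.mul contDiff_id)
  have hzero : ∀ j ≤ k, iteratedDeriv j g um = 0 := fun j hj => by
    rcases j.eq_zero_or_pos with rfl | hj_pos
    · simpa using hg_um
    · exact hdeg j hj_pos hj
  obtain ⟨C, hC_pos, hC⟩ :=
    exists_abs_le_mul_pow_sub_right_of_iteratedDeriv_eq_zero hg_smooth hum hzero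
  refine ⟨um * C, by positivity, fun z => ?_⟩
  obtain ⟨hU_pos, hU_lt⟩ := hUrange z
  calc |deriv U z| = U z * |g (U z)| := by rw [hUode, abs_mul, abs_of_pos hU_pos]
    _ ≤ um * (C * (um - U z) ^ (k + 1)) :=
        mul_le_mul hU_lt.le (hC _ ⟨hU_pos.le, hU_lt.le⟩) (abs_nonneg _) hum.le
    _ = um * C * (um - U z) ^ (1 + k) := by rw [add_comm 1 k, mul_assoc]

/-- For a shock profile `U` with the degenerate condition `g⁽ʲ⁾(u₋) = 0`
for `1 ≤ j ≤ k₋`, one has `|U'(z)| ≤ C·(u₋ - U(z))^{1+k₋}` for all `z`. -/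
theorem stmt_11
    (k : ℕ) (hk : 1 ≤ k)
    (f : ℝ → ℝ) (hf : ContDiff ℝ (k + 1 : ℕ) f)
    (um : ℝ) (hum : 0 < um)
    (s : ℝ) (hs : s = (f um - f 0) / um)
    (g : ℝ → ℝ) (hg : ∀ u, g u = f u - f 0 - s * u)
    (U : ℝ → ℝ) (hU : ContDiff ℝ 1 U)
    (hUrange : ∀ z, U z ∈ Set.Ioo 0 um)
    (hUode : ∀ z, deriv U z = U z * g (U z))
    (hUbot : Tendsto U atBot (nhds um))
    (hUtop : Tendsto U atTop (nhds 0))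
    (hdeg : ∀ j : ℕ, 1 ≤ j → j ≤ k → iteratedDeriv j g um = 0) :
    ∃ C : ℝ, 0 < C ∧ ∀ z : ℝ, |deriv U z| ≤ C * (um - U z) ^ (1 + k) :=
  stmt_11_general k f hf um hum s hs g hg U hUrange hUode hdeg
end

section
/- Let k₊ ≥ 1 be an integer, let f be (k₊+2)-times continuously differentiable, and let U be a shock profile. Assume the degenerate condition at the right state, g^{(j)}(0) = 0 for 1 ≤ j ≤ k₊ and g^{(k₊+1)}(0) ≠ 0, and the nondegenerate condition at the left state, g'(u_-) = f'(u_-) - s > 0. Define w₄ : (0, u_-) → ℝ by w₄(u) = u·(u - u_-)/g(u) (which is positive and C¹ on (0, u_-)). Then sup_{z ∈ ℝ} |w₄'(U(z))/w₄(U(z))| · |U'(z)/U(z)| < ∞. -/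
/-!
The logarithmic derivative of `w₄(u) = u (u - u₋) / g(u)` is `1/u + 1/(u - u₋) - g'(u)/g(u)`,
and along the profile `U'/U = g(U)`, so the product in question is
`g(u)/u + g(u)/(u - u₋) - g'(u)` at `u = U(z)`. Since `g` is `C¹` and vanishes at both endpoints
`0` and `u₋`, each of the three terms is bounded by the maximum of `|g'|` on `[0, u₋]`.
-/

open Set Filter Topology

lemma logDeriv_sub_const (a u : ℝ) : logDeriv (fun v => v - a) u = 1 / (u - a) := by
  simp [logDeriv_apply]

lemma abs_le_mul_abs_sub_of_abs_deriv_le {g : ℝ → ℝ} {a b L x y : ℝ}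
    (hg : ∀ v ∈ Icc a b, DifferentiableAt ℝ g v) (hL : ∀ v ∈ Icc a b, |deriv g v| ≤ L)
    (hx : x ∈ Icc a b) (hy : y ∈ Icc a b) (hgx : g x = 0) : |g y| ≤ L * |y - x| := by
  simpa [hgx] using (convex_Icc a b).norm_image_sub_le_of_norm_deriv_le hg hL hx hy

lemma logDeriv_sub_mul_sub_div_mul_eq {g w : ℝ → ℝ} {a b u : ℝ}
    (hw : w =ᶠ[𝓝 u] fun v => (v - a) * (v - b) / g v) (hg : DifferentiableAt ℝ g u)
    (hua : u ≠ a) (hub : u ≠ b) (hgu : g u ≠ 0) :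
    logDeriv w u * g u = g u / (u - a) + g u / (u - b) - deriv g u := by
  have hua' : u - a ≠ 0 := sub_ne_zero.mpr hua
  have hub' : u - b ≠ 0 := sub_ne_zero.mpr hub
  rw [(logDeriv_congr_nhds hw).eq_of_nhds,
    logDeriv_div (f := fun v => (v - a) * (v - b)) u (mul_ne_zero hua' hub') hgu (by fun_prop) hg,
    logDeriv_mul u hua' hub' (by fun_prop) (by fun_prop),
    logDeriv_sub_const, logDeriv_sub_const, logDeriv_apply]
  field_simp

theorem exists_abs_logDeriv_mul_le {g w : ℝ → ℝ} {a b : ℝ} (hg : ContDiff ℝ 1 g)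
    (hga : g a = 0) (hgb : g b = 0) (hw : ∀ u ∈ Ioo a b, w u = (u - a) * (u - b) / g u) :
    ∃ M, ∀ u ∈ Ioo a b, |logDeriv w u| * |g u| ≤ M := by
  have hgd : Differentiable ℝ g := hg.differentiable one_ne_zero
  obtain ⟨L, hL⟩ := isCompact_Icc.exists_bound_of_continuousOn
    (hg.continuous_deriv le_rfl).continuousOn (s := Icc a b)
  simp only [Real.norm_eq_abs] at hL
  refine ⟨3 * L, fun u hu => ?_⟩
  have huIcc : u ∈ Icc a b := Ioo_subset_Icc_self hu
  have hab : a ≤ b := (hu.1.trans hu.2).le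
  have hga_le : |g u| ≤ L * (u - a) := by
    simpa [abs_of_pos (sub_pos.2 hu.1)] using
      abs_le_mul_abs_sub_of_abs_deriv_le (fun v _ => hgd v) hL ⟨le_rfl, hab⟩ huIcc hga
  have hgb_le : |g u| ≤ L * (b - u) := by
    simpa [abs_sub_comm u b, abs_of_pos (sub_pos.2 hu.2)] using
      abs_le_mul_abs_sub_of_abs_deriv_le (fun v _ => hgd v) hL ⟨hab, le_rfl⟩ huIcc hgb
  have hL0 : 0 ≤ L := (abs_nonneg _).trans (hL u huIcc)
  rcases eq_or_ne (g u) 0 with hgu | hgu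
  · simp [hgu, hL0]
  have hw_nhds : w =ᶠ[𝓝 u] fun v => (v - a) * (v - b) / g v :=
    eventually_of_mem (isOpen_Ioo.mem_nhds hu) hw
  rw [← abs_mul, logDeriv_sub_mul_sub_div_mul_eq hw_nhds (hgd u) hu.1.ne' hu.2.ne hgu]
  have h1 : |g u / (u - a)| ≤ L := by
    rw [abs_div, abs_of_pos (sub_pos.2 hu.1), div_le_iff₀ (sub_pos.2 hu.1)]; exact hga_le
  have h2 : |g u / (u - b)| ≤ L := by
    rw [abs_div, abs_sub_comm, abs_of_pos (sub_pos.2 hu.2), div_le_iff₀ (sub_pos.2 hu.2)]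
    exact hgb_le
  calc |g u / (u - a) + g u / (u - b) - deriv g u|
      ≤ |g u / (u - a) + g u / (u - b)| + |deriv g u| := abs_sub _ _
    _ ≤ |g u / (u - a)| + |g u / (u - b)| + |deriv g u| := by gcongr; exact abs_add_le _ _
    _ ≤ 3 * L := by linarith [hL u huIcc]

theorem stmt_16_general
    (k : ℕ)
    (f : ℝ → ℝ) (hf : ContDiff ℝ (k + 2 : ℕ) f)
    (um : ℝ) (hum : 0 < um)
    (s : ℝ) (hs : s = (f um - f 0) / um)
    (g : ℝ → ℝ) (hg : ∀ u, g u = f u - f 0 - s * u)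
    (U : ℝ → ℝ)
    (hUrange : ∀ z, U z ∈ Set.Ioo 0 um)
    (hUode : ∀ z, deriv U z = U z * g (U z))
    (w₄ : ℝ → ℝ) (hw₄ : ∀ u ∈ Set.Ioo 0 um, w₄ u = u * (u - um) / g u) :
    ∃ M : ℝ, ∀ z : ℝ,
      |deriv w₄ (U z) / w₄ (U z)| * |deriv U z / U z| ≤ M := by
  have hf1 : ContDiff ℝ 1 f := hf.of_le (by norm_cast; omega)
  have hg1 : ContDiff ℝ 1 g := by
    rw [funext hg]
    fun_prop
  have hg0 : g 0 = 0 := by rw [hg]; ring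
  have hgum : g um = 0 := by rw [hg, hs]; field_simp; ring
  obtain ⟨M, hM⟩ := exists_abs_logDeriv_mul_le (w := w₄) hg1 hg0 hgum fun u hu => by
    rw [sub_zero, hw₄ u hu]
  refine ⟨M, fun z => ?_⟩
  have hU_logDeriv : deriv U z / U z = g (U z) := by
    rw [hUode z, mul_div_cancel_left₀ _ (hUrange z).1.ne']
  rw [hU_logDeriv, ← logDeriv_apply]
  exact hM (U z) (hUrange z)

/-- For a shock profile `U` with the degenerate condition at the right state
(`g⁽ʲ⁾(0) = 0` for `1 ≤ j ≤ k₊`, `g⁽ᵏ⁺⁺¹⁾(0) ≠ 0`) and the nondegenerate condition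
`g'(u₋) = f'(u₋) - s > 0` at the left state, the weight `w₄(u) = u·(u - u₋)/g(u)`
satisfies `sup_z |w₄'(U(z))/w₄(U(z))|·|U'(z)/U(z)| < ∞`. -/
theorem stmt_16
    (k : ℕ) (hk : 1 ≤ k)
    (f : ℝ → ℝ) (hf : ContDiff ℝ (k + 2 : ℕ) f)
    (um : ℝ) (hum : 0 < um)
    (s : ℝ) (hs : s = (f um - f 0) / um)
    (g : ℝ → ℝ) (hg : ∀ u, g u = f u - f 0 - s * u)
    (U : ℝ → ℝ) (hU : ContDiff ℝ 1 U)
    (hUrange : ∀ z, U z ∈ Set.Ioo 0 um)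
    (hUode : ∀ z, deriv U z = U z * g (U z))
    (hUbot : Tendsto U atBot (nhds um))
    (hUtop : Tendsto U atTop (nhds 0))
    (hdeg : ∀ j : ℕ, 1 ≤ j → j ≤ k → iteratedDeriv j g 0 = 0)
    (hdeg' : iteratedDeriv (k + 1) g 0 ≠ 0)
    (hnd : 0 < deriv f um - s)
    (w₄ : ℝ → ℝ) (hw₄ : ∀ u ∈ Set.Ioo 0 um, w₄ u = u * (u - um) / g u) :
    ∃ M : ℝ, ∀ z : ℝ,
      |deriv w₄ (U z) / w₄ (U z)| * |deriv U z / U z| ≤ M :=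
  stmt_16_general k f hf um hum s hs g hg U hUrange hUode w₄ hw₄
end
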